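/- arXiv:1711.05195 — 10 statements merged into one kernel-verified Lean document; each statement's English description precedes it below -/
import Mathlib

section
/- For every k ∈ ℕ and every set X whose cardinality is at most ℵ_k, there exists a (k+1)-size monotone compression scheme for the class of all finite subsets of X. -/
/-!
By induction on `k`, every set of cardinality `< ℵ_k` has a scheme of size `k`. Below `ℵ_0`
the set is finite and `η := univ` needs no points. Otherwise the set embeds into the initial
ordinal of `ℵ_{k-1}`, whose proper initial segments have cardinality `< ℵ_{k-1}`; a finite
set `S` with maximum `m` is then compressed to `m` together with a compression of the part
of `S` below `m`, which costs one extra point.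
-/

open Cardinal Finset

def HasMonotoneCompressionScheme (X : Type*) (n : ℕ) : Prop :=
  ∃ η : Finset X → Finset X, ∀ S : Finset X, ∃ S' ⊆ S, S'.card ≤ n ∧ S ⊆ η S'

namespace HasMonotoneCompressionScheme

theorem of_finite (X : Type*) [Finite X] : HasMonotoneCompressionScheme X 0 := by
  have := Fintype.ofFinite X
  exact ⟨fun _ => univ, fun _ => ⟨∅, empty_subset _, by simp, subset_univ _⟩⟩

theorem of_embedding {X Y : Type*} {n : ℕ} (f : X ↪ Y) (h : HasMonotoneCompressionScheme Y n) :
    HasMonotoneCompressionScheme X n := by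
  obtain ⟨η, hη⟩ := h
  refine ⟨fun T => (η (T.map f)).preimage f f.injective.injOn, fun S => ?_⟩
  obtain ⟨T, hTS, hT, hST⟩ := hη (S.map f)
  obtain ⟨S', hS'S, rfl⟩ := subset_map_iff.1 hTS
  exact ⟨S', hS'S, by rwa [card_map] at hT,
    fun x hx => mem_preimage.2 (hST (mem_map_of_mem f hx))⟩

section LinearOrder

variable {X : Type*} [LinearOrder X]

theorem subtype_insert_map_subtype (m : X) (u : Finset (Set.Iio m)) :
    (insert m (u.map (Function.Embedding.subtype _))).subtype (· ∈ Set.Iio m) = u := by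
  ext a
  simpa [a.2.ne] using fun _ => a.2.out

theorem max'_insert_map_subtype (m : X) (u : Finset (Set.Iio m)) :
    (insert m (u.map (Function.Embedding.subtype _))).max' (insert_nonempty _ _) = m := by
  refine (max'_eq_iff _ _ _).2 ⟨mem_insert_self _ _, fun b hb => ?_⟩
  simp only [mem_insert, mem_map, Function.Embedding.subtype_apply] at hb
  obtain rfl | ⟨c, -, rfl⟩ := hb
  exacts [le_rfl, c.2.le]

theorem of_forall_Iio {n : ℕ} (h : ∀ x : X, HasMonotoneCompressionScheme (Set.Iio x) n) :
    HasMonotoneCompressionScheme X (n + 1) := by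
  classical
  choose η hη using h
  refine ⟨fun T => if hT : T.Nonempty then insert (T.max' hT)
      ((η _ (T.subtype (· ∈ Set.Iio (T.max' hT)))).map (Function.Embedding.subtype _))
    else ∅, fun S => ?_⟩
  rcases S.eq_empty_or_nonempty with rfl | hS
  · exact ⟨∅, Subset.rfl, by simp, Subset.rfl⟩
  set m := S.max' hS
  obtain ⟨u, huS, hu, hSu⟩ := hη m (S.subtype (· ∈ Set.Iio m))
  refine ⟨insert m (u.map (Function.Embedding.subtype _)), ?_, ?_, ?_⟩
  · refine insert_subset (max'_mem _ _) fun x hx => ?_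
    obtain ⟨y, hy, rfl⟩ := mem_map.1 hx
    exact mem_subtype.1 (huS hy)
  · exact (card_insert_le _ _).trans (by rw [card_map]; omega)
  · intro x hx
    dsimp only
    rw [dif_pos (insert_nonempty _ _), max'_insert_map_subtype, subtype_insert_map_subtype]
    rcases (le_max' S x hx).lt_or_eq with hxm | hxm
    · exact mem_insert_of_mem (mem_map_of_mem _ (hSu (x := ⟨x, hxm⟩) (mem_subtype.2 hx)))
    · exact hxm ▸ mem_insert_self _ _

end LinearOrder

theorem of_mk_lt_aleph (k : ℕ) {X : Type*} (hX : #X < ℵ_ k) :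
    HasMonotoneCompressionScheme X k := by
  induction k generalizing X with
  | zero =>
    rw [Nat.cast_zero, aleph_zero, lt_aleph0_iff_finite] at hX
    exact of_finite X
  | succ k ih =>
    have hX' : #X ≤ #(ℵ_ k).ord.ToType := by
      rw [mk_ord_toType, ← Order.lt_succ_iff, succ_aleph]
      exact_mod_cast hX
    refine of_embedding (le_def _ _ |>.1 hX').some (of_forall_Iio fun x => ih ?_)
    simpa using mk_Iio_lt x (by simp)

end HasMonotoneCompressionScheme

/-- For every k ∈ ℕ and every set X whose cardinality is at most ℵ_k,
there exists a (k+1)-size monotone compression scheme for the class of all finite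
subsets of X. -/
theorem stmt_0 (k : ℕ) (X : Type*) (hX : Cardinal.mk X ≤ Cardinal.aleph k) :
    ∃ η : Finset X → Finset X,
      ∀ S : Finset X, ∃ S' ⊆ S, S'.card ≤ k + 1 ∧ S ⊆ η S' :=
  HasMonotoneCompressionScheme.of_mk_lt_aleph (k + 1)
    (hX.trans_lt (aleph_lt_aleph.2 (by exact_mod_cast k.lt_succ_self)))
end

section
/- Let k ∈ ℕ and let X be a set. Suppose there exists a function η from the finite subsets of X of cardinality at most k+1 to the finite subsets of X such that for every subset S ⊆ X with |S| = k+2 there exists S' ⊆ S with |S'| ≤ k+1 and S ⊆ η(S'). Then the cardinality of X is at most ℵ_k. -/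
/-!
Induction on `n`: if `η` compresses samples of size `n + 1` to size at most `n`, then
`#X < ℵ_n`. For `n = 0` all of `X` lies in `η ∅`. If `ℵ_(n+1) ≤ #X`, close a subset of size
`ℵ_n` under `η` (countably many rounds keep the size) to get `A`, and pick `z ∉ A`. A sample
`S ⊆ A` of size `n + 1` extends to the sample `S ∪ {z}`, whose compression must contain `z`,
because `η` maps finite subsets of `A` into `A`. Dropping `z` compresses `S` to size at most `n`
through `U ↦ η (U ∪ {z}) ∩ A`, so `#A < ℵ_n` by induction, a contradiction.
-/

open Cardinal

namespace Compression

variable {X : Type*}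

/-- Samples of size `n + 1` compress, through `η`, to subsamples of size at most `n`. -/
def Compresses (η : Finset X → Finset X) (n : ℕ) : Prop :=
  ∀ S : Finset X, S.card = n + 1 → ∃ S' ⊆ S, S'.card ≤ n ∧ S ⊆ η S'

def IsClosedUnder (η : Finset X → Finset X) (A : Set X) : Prop :=
  ∀ S : Finset X, ↑S ⊆ A → ↑(η S) ⊆ A

section Hull

variable (η : Finset X → Finset X)

def closureStep (C : Set X) : Set X :=
  C ∪ ⋃ T : Finset C, ↑(η (T.map (Function.Embedding.subtype (· ∈ C))))

def hull (B : Set X) : Set X :=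
  ⋃ n, (closureStep η)^[n] B

lemma subset_closureStep (C : Set X) : C ⊆ closureStep η C :=
  Set.subset_union_left

lemma coe_subset_closureStep {C : Set X} {S : Finset X} (hS : ↑S ⊆ C) :
    ↑(η S) ⊆ closureStep η C := by
  classical
  have hmap : (S.subtype (· ∈ C)).map (Function.Embedding.subtype (· ∈ C)) = S :=
    Finset.subtype_map_of_mem fun _ hx => hS hx
  rw [← hmap]
  exact (Set.subset_iUnion (fun T : Finset C => (↑(η (T.map _)) : Set X)) _).trans
    Set.subset_union_right

lemma mk_closureStep_le {C : Set X} (hC : ℵ₀ ≤ #C) : #(closureStep η C) ≤ #C := by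
  have := aleph0_le_mk_iff.mp hC
  have hunion : #(⋃ T : Finset C, (↑(η (T.map (Function.Embedding.subtype (· ∈ C)))) : Set X))
      ≤ #C * ℵ₀ := by
    refine (mk_iUnion_le _).trans ?_
    rw [mk_finset_of_infinite]
    exact mul_le_mul_right (ciSup_le fun T => (Finset.finite_toSet _).countable.le_aleph0) _
  calc #(closureStep η C) ≤ #C + #C * ℵ₀ := (mk_union_le _ _).trans (add_le_add_right hunion _)
    _ = #C := by rw [mul_aleph0_eq hC, add_eq_self hC]

lemma monotone_iterate_closureStep (B : Set X) :
    Monotone fun n => (closureStep η)^[n] B :=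
  monotone_nat_of_le_succ fun n => by
    simpa only [Function.iterate_succ_apply'] using subset_closureStep η _

lemma subset_hull (B : Set X) : B ⊆ hull η B :=
  Set.subset_iUnion (fun n => (closureStep η)^[n] B) 0

lemma mk_hull {B : Set X} (hB : ℵ₀ ≤ #B) : #(hull η B) = #B := by
  have hiter : ∀ n, #((closureStep η)^[n] B) ≤ #B := by
    intro n
    induction n with
    | zero => exact le_rfl
    | succ n ih =>
      have hinf : ℵ₀ ≤ #((closureStep η)^[n] B) :=
        hB.trans (mk_le_mk_of_subset (monotone_iterate_closureStep η B n.zero_le))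
      rw [Function.iterate_succ_apply']
      exact (mk_closureStep_le η hinf).trans ih
  refine le_antisymm ?_ (mk_le_mk_of_subset (subset_hull η B))
  calc #(hull η B) ≤ ℵ₀ * ⨆ n, #((closureStep η)^[n] B) := by
        simpa [hull] using mk_iUnion_le_lift fun n => (closureStep η)^[n] B
    _ ≤ ℵ₀ * #B := mul_le_mul_right (ciSup_le hiter) _
    _ = #B := aleph0_mul_eq hB

lemma isClosedUnder_hull (B : Set X) : IsClosedUnder η (hull η B) := by
  intro S hS
  obtain ⟨n, hn⟩ :=
    (monotone_iterate_closureStep η B).directed_le.exists_mem_subset_of_finset_subset_biUnion hS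
  refine (coe_subset_closureStep η hn).trans ?_
  rw [← Function.iterate_succ_apply' (closureStep η)]
  exact Set.subset_iUnion (fun n => (closureStep η)^[n] B) (n + 1)

end Hull

lemma Compresses.finite {η : Finset X → Finset X} (h : Compresses η 0) : Finite X := by
  have hsub : Set.univ ⊆ (↑(η ∅) : Set X) := fun x _ => by
    obtain ⟨S', hS', hcard, hx⟩ := h {x} (Finset.card_singleton x)
    rw [Finset.card_eq_zero.mp (Nat.le_zero.mp hcard)] at hx
    exact hx (Finset.mem_singleton_self x)
  exact Set.finite_univ_iff.mp ((η ∅).finite_toSet.subset hsub)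

open Classical in
noncomputable def restrict (η : Finset X → Finset X) (A : Set X) (z : X) (U : Finset A) :
    Finset A :=
  (η (insert z (U.map (Function.Embedding.subtype (· ∈ A))))).subtype (· ∈ A)

lemma Compresses.restrict_of_isClosedUnder {η : Finset X → Finset X} {n : ℕ}
    (h : Compresses η (n + 1)) {A : Set X} (hA : IsClosedUnder η A) {z : X} (hz : z ∉ A) :
    Compresses (restrict η A z) n := by
  classical
  intro S hS
  set e := Function.Embedding.subtype (· ∈ A)
  have hzS : z ∉ S.map e := fun hz' => by
    obtain ⟨x, -, rfl⟩ := Finset.mem_map.mp hz'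
    exact hz x.2
  obtain ⟨S', hS'sub, hS'card, hS'η⟩ := h (insert z (S.map e))
    (by rw [Finset.card_insert_of_notMem hzS, Finset.card_map, hS])
  have herase : ↑(S'.erase z) ⊆ A := fun x hx => by
    obtain ⟨hxz, hxS'⟩ := Finset.mem_erase.mp hx
    obtain ⟨y, -, rfl⟩ := Finset.mem_map.mp ((Finset.mem_insert.mp (hS'sub hxS')).resolve_left hxz)
    exact y.2
  have hzS' : z ∈ S' := by
    by_contra hzS'
    rw [← Finset.erase_eq_of_notMem hzS'] at hS'η
    exact hz (hA _ herase (hS'η (Finset.mem_insert_self z _)))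
  set U := (S'.erase z).subtype (· ∈ A)
  have hU : U.map e = S'.erase z := Finset.subtype_map_of_mem fun _ hx => herase hx
  refine ⟨U, fun x hx => ?_, ?_, fun x hx => ?_⟩
  · have hxS'z : e x ∈ S'.erase z := hU ▸ Finset.mem_map_of_mem e hx
    obtain ⟨hxz, hxS'⟩ := Finset.mem_erase.mp hxS'z
    exact (Finset.mem_map' e).mp ((Finset.mem_insert.mp (hS'sub hxS')).resolve_left hxz)
  · rw [← Finset.card_map e, hU, Finset.card_erase_of_mem hzS']
    omega
  · have hxη : e x ∈ η S' := hS'η (Finset.mem_insert_of_mem (Finset.mem_map_of_mem e hx))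
    rw [← Finset.insert_erase hzS', ← hU] at hxη
    exact Finset.mem_subtype.mpr hxη

theorem Compresses.mk_lt_aleph {η : Finset X → Finset X} {n : ℕ} (h : Compresses η n) :
    #X < ℵ_ n := by
  induction n generalizing X with
  | zero =>
    have := h.finite
    rw [Nat.cast_zero, aleph_zero]
    exact mk_lt_aleph0
  | succ n ih =>
    by_contra! hX
    have hlt : ℵ_ n < ℵ_ (n + 1 : ℕ) := aleph_lt_aleph.mpr (by exact_mod_cast n.lt_succ_self)
    obtain ⟨B, hB⟩ := le_mk_iff_exists_set.mp (hlt.le.trans hX)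
    have hA : #(hull η B) = ℵ_ n := (mk_hull η (hB ▸ aleph0_le_aleph n)).trans hB
    obtain ⟨z, hz⟩ : ∃ z, z ∉ hull η B := by
      by_contra! hall
      rw [Set.eq_univ_of_forall hall, mk_univ] at hA
      exact (hA ▸ hX).not_gt hlt
    exact (ih (h.restrict_of_isClosedUnder (isClosedUnder_hull η B) hz)).ne hA

end Compression

/-- If samples of size k+2 from X can be monotonically compressed to
subsamples of size at most k+1 (with a reconstruction function η on finite subsets of
size ≤ k+1 returning a finite superset of the original (k+2)-element set), then
|X| ≤ ℵ_k. -/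
theorem stmt_1 (k : ℕ) (X : Type*) (η : Finset X → Finset X)
    (hη : ∀ S : Finset X, S.card = k + 2 →
      ∃ S' ⊆ S, S'.card ≤ k + 1 ∧ S ⊆ η S') :
    Cardinal.mk X ≤ Cardinal.aleph k := by
  have : #X < ℵ_ (k + 1 : ℕ) := Compression.Compresses.mk_lt_aleph (η := η) hη
  rwa [Nat.cast_add_one, ← succ_aleph, Order.lt_succ_iff] at this
end

section
/- Let k ≥ 1 be a natural number and let X' ⊆ X be infinite sets with |X'| < |X| (as cardinals). Suppose there is a function η from the finite subsets of X of cardinality at most k to the finite subsets of X such that every subset S ⊆ X with |S| = k+1 admits S' ⊆ S with |S'| ≤ k and S ⊆ η(S'). Then there is a function η' from the finite subsets of X' of cardinality at most k−1 to the finite subsets of X' such that every subset S ⊆ X' with |S| = k admits S' ⊆ S with |S'| ≤ k−1 and S ⊆ η'(S'). -/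
/-! Since `#X' < #X` and `X'` is infinite, the set `X'` together with all the finite sets
`η T`, `T ⊆ X'`, has cardinality at most `#X'`, so some `x ∈ X` lies outside all of them.
Compress a `k`-set `S ⊆ X'` by compressing `S ∪ {x}` with `η` to some `S'`. If `x ∉ S'` then
`S' ⊆ X'` and `x ∈ η S'`, contrary to the choice of `x`; so `x ∈ S'`, and `S' \ {x}` is a
compression of `S` of size at most `k - 1`, decoded by `T ↦ η (T ∪ {x}) ∩ X'`. -/

open Cardinal Finset

universe u

def IsMonotoneCompressionScheme {α : Type*} (n m : ℕ) (η : Finset α → Finset α) : Prop :=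
  ∀ S : Finset α, S.card = n → ∃ S' ⊆ S, S'.card ≤ m ∧ S ⊆ η S'

theorem IsMonotoneCompressionScheme.comap_insert {α β : Type*} [DecidableEq α] {n m : ℕ}
    {η : Finset α → Finset α} (hη : IsMonotoneCompressionScheme (n + 1) m η) (e : β ↪ α)
    {x : α} (hx : x ∉ Set.range e) (hxη : ∀ T : Finset β, x ∉ η (T.map e)) :
    IsMonotoneCompressionScheme n (m - 1)
      fun T => (η (insert x (T.map e))).preimage e e.injective.injOn := by
  intro S hS
  have hxS : x ∉ S.map e := fun h => hx <| by
    obtain ⟨a, -, rfl⟩ := mem_map.1 h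
    exact ⟨a, rfl⟩
  obtain ⟨S', hS'S, hS'card, hS'η⟩ :=
    hη (insert x (S.map e)) (by rw [card_insert_of_notMem hxS, card_map, hS])
  have hxS' : x ∈ S' := by
    by_contra h
    obtain ⟨T, -, rfl⟩ := subset_map_iff.1 ((subset_insert_iff_of_notMem h).1 hS'S)
    exact hxη T (hS'η (mem_insert_self _ _))
  obtain ⟨T, hTS, hT⟩ := subset_map_iff.1 (subset_insert_iff.1 hS'S)
  refine ⟨T, hTS, ?_, fun a ha => ?_⟩
  · calc T.card = (S'.erase x).card := by rw [hT, card_map]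
      _ = S'.card - 1 := card_erase_of_mem hxS'
      _ ≤ m - 1 := Nat.sub_le_sub_right hS'card 1
  · rw [mem_preimage, ← hT, insert_erase hxS']
    exact hS'η (mem_insert_of_mem (mem_map_of_mem e ha))

theorem mk_iUnion_finset_le {α β : Type u} [Infinite β] (f : Finset β → Set α)
    (hf : ∀ T, (f T).Finite) : #(⋃ T, f T) ≤ #β :=
  calc #(⋃ T, f T) ≤ #(Finset β) * ⨆ T, #(f T) := mk_iUnion_le f
    _ ≤ #β * ℵ₀ := by
      rw [mk_finset_of_infinite]
      exact mul_le_mul_right (ciSup_le' fun T => (hf T).lt_aleph0.le) _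
    _ = #β := mul_aleph0_eq (aleph0_le_mk β)

theorem exists_notMem_forall_notMem_map_subtype {X : Type u} {X' : Set X}
    (hX' : X'.Infinite) (hcard : #X' < #X) (η : Finset X → Finset X) :
    ∃ x ∉ X', ∀ T : Finset X', x ∉ η (T.map (Function.Embedding.subtype _)) := by
  have := hX'.to_subtype
  let covered := X' ∪ ⋃ T : Finset X', (η (T.map (Function.Embedding.subtype _)) : Set X)
  have hcovered : #covered < #X :=
    calc #covered ≤ #X' + #X' :=
          (mk_union_le _ _).trans (add_le_add_right (mk_iUnion_finset_le _ fun _ => finite_toSet _) _)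
      _ = #X' := add_eq_self (aleph0_le_mk _)
      _ < #X := hcard
  obtain ⟨x, hx⟩ := compl_nonempty_of_mk_lt_mk hcovered
  simp only [covered, Set.mem_compl_iff, Set.mem_union, Set.mem_iUnion, mem_coe, not_or,
    not_exists] at hx
  exact ⟨x, hx.1, hx.2⟩

theorem stmt_2_general (k : ℕ) (X : Type*) (X' : Set X)
    (hX'inf : X'.Infinite)
    (hcard : Cardinal.mk X' < Cardinal.mk X)
    (η : Finset X → Finset X)
    (hη : ∀ S : Finset X, S.card = k + 1 →
      ∃ S' ⊆ S, S'.card ≤ k ∧ S ⊆ η S') :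
    ∃ η' : Finset X' → Finset X',
      ∀ S : Finset X', S.card = k →
        ∃ S' ⊆ S, S'.card ≤ k - 1 ∧ S ⊆ η' S' := by
  classical
  obtain ⟨x, hxX', hxη⟩ := exists_notMem_forall_notMem_map_subtype hX'inf hcard η
  exact ⟨_, IsMonotoneCompressionScheme.comap_insert (n := k) hη _ (by simpa using hxX') hxη⟩

/-- Let k ≥ 1 and let X' ⊆ X be infinite sets with |X'| < |X|. If the
finite subsets of X admit a (k+1) → k monotone compression scheme, then the finite
subsets of X' admit a k → (k-1) monotone compression scheme. -/
theorem stmt_2 (k : ℕ) (hk : 1 ≤ k) (X : Type*) (X' : Set X)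
    (hX'inf : X'.Infinite) (hXinf : Infinite X)
    (hcard : Cardinal.mk X' < Cardinal.mk X)
    (η : Finset X → Finset X)
    (hη : ∀ S : Finset X, S.card = k + 1 →
      ∃ S' ⊆ S, S'.card ≤ k ∧ S ⊆ η S') :
    ∃ η' : Finset X' → Finset X',
      ∀ S : Finset X', S.card = k →
        ∃ S' ⊆ S, S'.card ≤ k - 1 ∧ S ⊆ η' S' :=
  stmt_2_general k X X' hX'inf hcard η hη
end

section
/- For every k ∈ ℕ and every set X, there exists a (k+1)-size monotone compression scheme for the class of all finite subsets of X if and only if the cardinality of X is at most ℵ_k. -/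
/-!
A `(k+1)`-scheme on a linear order is obtained by remembering the maximum `x` of a sample and
compressing the rest of it with a `k`-scheme on `Iio x`. A set of size `≤ ℵ_k` embeds in the
initial ordinal of `ℵ_k`, all of whose `Iio x` have size `< ℵ_k`; so by induction `#X < ℵ_k`
gives a `k`-scheme on `X`.

Conversely, given a `(k+1)`-scheme `η` on `X` and an infinite `Y ⊆ X` with `#Y < #X`, the sets
`η T` for finite `T ⊆ Y` do not cover `X`; pick `y` outside them all. A compression of
`insert y S` for `S ⊆ Y` must keep `y`, so `η (insert y ·)` is a `k`-scheme on `Y`. Taking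
`#Y = ℵ_k`, induction shows that a `k`-scheme forces `#X < ℵ_k`.
-/

open Cardinal Set

universe u

theorem Cardinal.exists_forall_notMem_of_mk_lt {ι X : Type u} [Infinite ι] (f : ι → Finset X)
    (h : #ι < #X) : ∃ x, ∀ i, x ∉ f i := by
  have hcard : #(⋃ i, (f i : Set X)) < #X := by
    refine lt_of_le_of_lt ((mk_iUnion_le _).trans ?_) h
    calc #ι * ⨆ i, #(f i : Set X) ≤ #ι * ℵ₀ :=
          mul_le_mul_right (ciSup_le' fun i => (Finset.finite_toSet _).lt_aleph0.le) _
      _ = #ι := mul_aleph0_eq (aleph0_le_mk ι)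
  obtain ⟨x, hx⟩ := (ne_univ_iff_exists_notMem (⋃ i, (f i : Set X))).1 fun huniv => by
    rw [huniv, mk_univ] at hcard
    exact hcard.false
  exact ⟨x, fun i hi => hx (mem_iUnion.2 ⟨i, hi⟩)⟩

theorem Cardinal.lt_aleph_natCast_succ_iff {c : Cardinal} {k : ℕ} :
    c < ℵ_ ↑(k + 1) ↔ c ≤ ℵ_ k := by
  rw [Nat.cast_succ, ← succ_aleph, Order.lt_succ_iff]

def HasMonotoneCompression (k : ℕ) (X : Type*) : Prop :=
  ∃ η : Finset X → Finset X, ∀ S : Finset X, ∃ S' ⊆ S, S'.card ≤ k ∧ S ⊆ η S'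

namespace HasMonotoneCompression

variable {k : ℕ} {X Y : Type*}

theorem of_embedding (f : X ↪ Y) (h : HasMonotoneCompression k Y) :
    HasMonotoneCompression k X := by
  obtain ⟨η, hη⟩ := h
  refine ⟨fun T => (η (T.map f)).preimage f f.injective.injOn, fun S => ?_⟩
  obtain ⟨S'', hS''S, hcard, hcover⟩ := hη (S.map f)
  obtain ⟨S', hS'S, rfl⟩ := Finset.subset_map_iff.1 hS''S
  refine ⟨S', hS'S, by rwa [Finset.card_map] at hcard, fun a ha => ?_⟩
  rw [Finset.mem_preimage]
  exact hcover (Finset.mem_map_of_mem f ha)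

theorem zero_iff : HasMonotoneCompression 0 X ↔ Finite X := by
  constructor
  · rintro ⟨η, hη⟩
    refine Finite.of_finite_univ ((η ∅).finite_toSet.subset fun a _ => ?_)
    obtain ⟨S', -, hcard, hcover⟩ := hη {a}
    rw [Finset.card_eq_zero.1 (Nat.le_zero.1 hcard)] at hcover
    exact hcover (Finset.mem_singleton_self a)
  · intro
    cases nonempty_fintype X
    exact ⟨fun _ => Finset.univ, fun _ => ⟨∅, Finset.empty_subset _, le_rfl, fun a _ =>
      Finset.mem_univ a⟩⟩

lemma subtype_Iio_insert_max [LinearOrder X] (x : X) (T : Finset (Iio x)) :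
    (insert x (T.map (Function.Embedding.subtype _))).subtype (· ∈ Iio x) = T := by
  ext a
  simp [Finset.mem_subtype, a.2.ne, mem_Iio.1 a.2]

theorem succ_of_forall_Iio [LinearOrder X] (h : ∀ x : X, HasMonotoneCompression k (Iio x)) :
    HasMonotoneCompression (k + 1) X := by
  classical
  choose η hη using h
  let ι (x : X) : Iio x ↪ X := Function.Embedding.subtype _
  let compressBelow (x : X) (S : Finset X) : Finset X :=
    insert x ((η x (S.subtype (· ∈ Iio x))).map (ι x))
  refine ⟨fun S => if hS : S.Nonempty then compressBelow (S.max' hS) S else ∅, fun S => ?_⟩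
  rcases S.eq_empty_or_nonempty with rfl | hS
  · exact ⟨∅, le_rfl, Nat.zero_le _, le_rfl⟩
  set x := S.max' hS
  obtain ⟨T, hTS, hcard, hcover⟩ := hη x (S.subtype (· ∈ Iio x))
  have hTS' : insert x (T.map (ι x)) ⊆ S := by
    refine Finset.insert_subset (S.max'_mem hS) fun a ha => ?_
    obtain ⟨b, hb, rfl⟩ := Finset.mem_map.1 ha
    exact Finset.mem_subtype.1 (hTS hb)
  have hne : (insert x (T.map (ι x))).Nonempty := Finset.insert_nonempty _ _
  have hmax : (insert x (T.map (ι x))).max' hne = x :=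
    le_antisymm (Finset.max'_le _ _ _ fun a ha => S.le_max' a (hTS' ha))
      (Finset.le_max' _ _ (Finset.mem_insert_self _ _))
  refine ⟨insert x (T.map (ι x)), hTS', ?_, ?_⟩
  · exact (Finset.card_insert_le _ _).trans (by rw [Finset.card_map]; omega)
  · intro a ha
    simp only [dif_pos hne, hmax, compressBelow, ι, subtype_Iio_insert_max]
    rcases (S.le_max' a ha).lt_or_eq with hlt | hax
    · exact Finset.mem_insert_of_mem (Finset.mem_map_of_mem (ι x)
        (hcover (Finset.mem_subtype.2 (show a ∈ S from ha) : (⟨a, hlt⟩ : Iio x) ∈ _)))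
    · exact hax ▸ Finset.mem_insert_self _ _

theorem of_succ_of_mk_lt {X : Type u} (h : HasMonotoneCompression (k + 1) X) (Y : Set X)
    [Infinite Y] (hYX : #Y < #X) : HasMonotoneCompression k Y := by
  classical
  obtain ⟨η, hη⟩ := h
  let e : Y ↪ X := Function.Embedding.subtype _
  obtain ⟨y, hy⟩ := Cardinal.exists_forall_notMem_of_mk_lt (fun T : Finset Y => η (T.map e))
    (by rwa [mk_finset_of_infinite])
  refine ⟨fun T => (η (insert y (T.map e))).preimage e e.injective.injOn, fun S => ?_⟩
  obtain ⟨S', hS'S, hcard, hcover⟩ := hη (insert y (S.map e))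
  obtain ⟨T, hTS, hT⟩ := Finset.subset_map_iff.1 (Finset.subset_insert_iff.1 hS'S)
  have hyS' : y ∈ S' := by
    by_contra hyS'
    rw [Finset.erase_eq_of_notMem hyS'] at hT
    exact hy T (hT ▸ hcover (Finset.mem_insert_self _ _))
  have hS' : S' = insert y (T.map e) := by rw [← hT, Finset.insert_erase hyS']
  refine ⟨T, hTS, ?_, fun a ha => ?_⟩
  · have := Finset.card_erase_of_mem hyS'
    rw [hT, Finset.card_map] at this
    omega
  · rw [Finset.mem_preimage, ← hS']
    exact hcover (Finset.mem_insert_of_mem (Finset.mem_map_of_mem e ha))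

end HasMonotoneCompression

theorem hasMonotoneCompression_of_mk_lt_aleph (k : ℕ) {X : Type u} (h : #X < ℵ_ k) :
    HasMonotoneCompression k X := by
  induction k generalizing X with
  | zero =>
    rw [Nat.cast_zero, aleph_zero, mk_lt_aleph0_iff] at h
    exact HasMonotoneCompression.zero_iff.2 h
  | succ k ih =>
    rw [lt_aleph_natCast_succ_iff, ← card_ord (ℵ_ k), ← mk_toType] at h
    obtain ⟨f⟩ := h
    exact (HasMonotoneCompression.succ_of_forall_Iio fun w => ih (by simpa using mk_Iio_lt w))
      |>.of_embedding f

theorem mk_lt_aleph_of_hasMonotoneCompression (k : ℕ) {X : Type u}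
    (h : HasMonotoneCompression k X) : #X < ℵ_ k := by
  induction k generalizing X with
  | zero =>
    rw [Nat.cast_zero, aleph_zero, mk_lt_aleph0_iff]
    exact HasMonotoneCompression.zero_iff.1 h
  | succ k ih =>
    rw [lt_aleph_natCast_succ_iff]
    by_contra! hX
    obtain ⟨Y, hY⟩ := le_mk_iff_exists_set.1 hX.le
    have : Infinite Y := infinite_iff.2 (hY ▸ aleph0_le_aleph k)
    exact (ih (h.of_succ_of_mk_lt Y (hY ▸ hX))).ne hY

theorem hasMonotoneCompression_iff_mk_lt_aleph (k : ℕ) (X : Type u) :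
    HasMonotoneCompression k X ↔ #X < ℵ_ k :=
  ⟨mk_lt_aleph_of_hasMonotoneCompression k, hasMonotoneCompression_of_mk_lt_aleph k⟩

/-- For every k ∈ ℕ and every set X, there exists a (k+1)-size monotone
compression scheme for the class of all finite subsets of X iff |X| ≤ ℵ_k. -/
theorem stmt_3 (k : ℕ) (X : Type*) :
    (∃ η : Finset X → Finset X,
        ∀ S : Finset X, ∃ S' ⊆ S, S'.card ≤ k + 1 ∧ S ⊆ η S') ↔
      Cardinal.mk X ≤ Cardinal.aleph k :=
  (hasMonotoneCompression_iff_mk_lt_aleph (k + 1) X).trans lt_aleph_natCast_succ_iff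
end

section
/- There exists a 2-size monotone compression scheme for the class of all finite subsets of ℝ if and only if the continuum hypothesis holds, i.e., the cardinality of ℝ equals ℵ₁. -/
/-!
If `X` admits a size-2 monotone compression scheme `η`, take a set `A` of size `ℵ₁`, close it under
`η` without leaving size `ℵ₁`, and pick `z` outside the closure `B`. Compressing `{a, b, z}` for
`a ≠ b` in `B` must keep `z` (otherwise `z` would lie in the closure), hence drops `a` or `b`; so
every pair of `B` is covered by one of the finite sets `F x = ⋃ {η T | T ⊆ {x, z}}`, which forces
`B` to be countable, a contradiction. Conversely, if `#X ≤ ℵ₁` then `X` embeds in `ω₁`, where each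
initial segment `Iic m` has an enumeration `enum m : ℕ → ω₁`; a finite set `S` with maximum `m` is
recovered from `m` and the element `s ∈ S` of largest index, as an initial part of `enum m`.
-/

open Cardinal Set

universe u

theorem mk_finset_le_of_aleph0_le {α : Type u} {κ : Cardinal.{u}} (hκ : ℵ₀ ≤ κ) (hα : #α ≤ κ) :
    #(Finset α) ≤ κ := by
  classical
  calc #(Finset α) ≤ #(List α) := mk_le_of_surjective List.toFinset_surjective
    _ ≤ max ℵ₀ #α := mk_list_le_max α
    _ ≤ κ := max_le hκ hα

theorem mk_iUnion_le_of_countable {α : Type u} {ι : Type*} [Countable ι] {f : ι → Set α}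
    {κ : Cardinal.{u}} (hκ : ℵ₀ ≤ κ) (hf : ∀ i, #(f i) ≤ κ) : #(⋃ i, f i) ≤ κ := by
  rw [← lift_le]
  calc lift #(⋃ i, f i) ≤ lift #ι * ⨆ i, lift #(f i) := mk_iUnion_le_lift f
    _ ≤ lift κ * lift κ := by
      gcongr
      · exact (lift_le_aleph0.mpr mk_le_aleph0).trans (aleph0_le_lift.mpr hκ)
      · exact ciSup_le' fun i => lift_le.mpr (hf i)
    _ = lift κ := mul_eq_self (aleph0_le_lift.mpr hκ)

theorem Set.Pairwise.countable_of_mem_or_mem {X : Type*} {S : Set X} {F : X → Finset X}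
    (h : S.Pairwise fun a b => a ∈ F b ∨ b ∈ F a) : S.Countable := by
  by_contra hS
  obtain ⟨C, hCS, hC, hC_inf⟩ :=
    (show S.Infinite from fun hfin => hS hfin.countable).exists_subset_countable_infinite
  have hD : (C ∪ ⋃ c ∈ C, (F c : Set X)).Countable :=
    hC.union (hC.biUnion fun c _ => (F c).countable_toSet)
  obtain ⟨y, hyS, hyD⟩ := not_subset.mp fun hSD => hS (hD.mono hSD)
  -- no `F c` with `c ∈ C` contains `y`, so all of `C` lies in the finite set `F y`
  refine hC_inf ((F y).finite_toSet.subset fun c hc => ?_)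
  have hcy : c ≠ y := fun hcy => hyD (Or.inl (hcy ▸ hc))
  exact (h (hCS hc) hyS hcy).resolve_right fun hyc => hyD (Or.inr (mem_biUnion hc hyc))

section Closure

variable {X : Type u} (η : Finset X → Finset X)

def closureStep (s : Set X) : Set X :=
  s ∪ ⋃ T : Finset s, (η (T.map (Function.Embedding.subtype _)) : Set X)

theorem mk_closureStep_le {κ : Cardinal.{u}} (hκ : ℵ₀ ≤ κ) {s : Set X} (hs : #s ≤ κ) :
    #(closureStep η s) ≤ κ := by
  refine (mk_union_le _ _).trans (add_le_of_le hκ hs ?_)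
  refine (mk_iUnion_le _).trans (mul_le_of_le hκ (mk_finset_le_of_aleph0_le hκ hs) ?_)
  exact ciSup_le' fun T => (lt_aleph0_of_finite _).le.trans hκ

theorem exists_superset_forall_finset_subset_mk_le {κ : Cardinal.{u}} (hκ : ℵ₀ ≤ κ) {A : Set X}
    (hA : #A ≤ κ) :
    ∃ B ⊇ A, #B ≤ κ ∧ ∀ T : Finset X, ↑T ⊆ B → ↑(η T) ⊆ B := by
  set stage : ℕ → Set X := fun n => (closureStep η)^[n] A
  have stage_succ : ∀ n, stage (n + 1) = closureStep η (stage n) := fun n =>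
    Function.iterate_succ_apply' _ _ _
  have stage_mono : Monotone stage := monotone_nat_of_le_succ fun n =>
    (stage_succ n).symm ▸ subset_union_left
  have mk_stage : ∀ n, #(stage n) ≤ κ := fun n => by
    induction n with
    | zero => exact hA
    | succ n ih => exact (stage_succ n).symm ▸ mk_closureStep_le η hκ ih
  refine ⟨⋃ n, stage n, subset_iUnion stage 0, mk_iUnion_le_of_countable hκ mk_stage, fun T hT => ?_⟩
  obtain ⟨n, hn⟩ := stage_mono.directed_le.exists_mem_subset_of_finset_subset_biUnion hT
  refine Subset.trans ?_ (subset_iUnion stage (n + 1))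
  rw [stage_succ]
  classical
  refine subset_union_of_subset_right (subset_iUnion_of_subset (T.subtype (· ∈ stage n)) ?_) _
  rw [Finset.subtype_map_of_mem hn]

end Closure

def HasCompressionScheme (X : Type*) (k : ℕ) : Prop :=
  ∃ η : Finset X → Finset X, ∀ S : Finset X, ∃ S' ⊆ S, S'.card ≤ k ∧ S ⊆ η S'

theorem HasCompressionScheme.of_embedding {X Y : Type*} {k : ℕ} (f : X ↪ Y)
    (h : HasCompressionScheme Y k) : HasCompressionScheme X k := by
  obtain ⟨η, hη⟩ := h
  refine ⟨fun T => (η (T.map f)).preimage f f.injective.injOn, fun S => ?_⟩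
  obtain ⟨S', hS'S, hcard, hcover⟩ := hη (S.map f)
  obtain ⟨U, hUS, rfl⟩ := Finset.subset_map_iff.mp hS'S
  exact ⟨U, hUS, by rwa [Finset.card_map] at hcard, Finset.map_subset_iff_subset_preimage.mp hcover⟩

theorem hasCompressionScheme_two_of_countable_Iic {α : Type*} [LinearOrder α]
    (hα : ∀ x : α, (Iic x).Countable) : HasCompressionScheme α 2 := by
  classical
  have hrange : ∀ x : α, ∃ g : ℕ → α, Iic x ⊆ range g := fun x =>
    have : Nonempty α := ⟨x⟩
    countable_iff_exists_subset_range.mp (hα x)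
  choose enum henum using hrange
  set index : α → α → ℕ := fun x => Function.invFun (enum x)
  have enum_index : ∀ {x y : α}, y ≤ x → enum x (index x y) = y := fun hy =>
    Function.invFun_eq (henum _ hy)
  refine ⟨fun T => T.biUnion fun x => (Finset.range (T.sup (index x) + 1)).image (enum x),
    fun S => ?_⟩
  rcases S.eq_empty_or_nonempty with rfl | hS
  · exact ⟨∅, subset_rfl, by simp, by simp⟩
  set m := S.max' hS
  obtain ⟨s, hsS, hs⟩ := S.exists_max_image (index m) hS
  refine ⟨{m, s}, Finset.insert_subset (S.max'_mem hS) (by simpa), Finset.card_le_two, ?_⟩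
  intro y hy
  simp only [Finset.mem_biUnion, Finset.mem_image, Finset.mem_range]
  refine ⟨m, by simp, index m y, ?_, enum_index (S.le_max' y hy)⟩
  have : index m s ≤ ({m, s} : Finset α).sup (index m) := Finset.le_sup (by simp)
  have := hs y hy
  omega

theorem hasCompressionScheme_two_of_mk_le_aleph_one {X : Type u} (hX : #X ≤ ℵ₁) :
    HasCompressionScheme X 2 := by
  rw [← card_ord ℵ₁, ← mk_toType, le_def] at hX
  obtain ⟨f⟩ := hX
  refine HasCompressionScheme.of_embedding f (hasCompressionScheme_two_of_countable_Iic fun x => ?_)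
  rw [← Iio_insert, countable_insert, ← le_aleph0_iff_set_countable, ← lt_aleph_one_iff]
  simpa using mk_Iio_lt x

theorem pairwise_mem_or_mem_of_card_le_two {X : Type*} [DecidableEq X] {η : Finset X → Finset X}
    (hη : ∀ S : Finset X, ∃ S' ⊆ S, S'.card ≤ 2 ∧ S ⊆ η S') {B : Set X}
    (hB : ∀ T : Finset X, ↑T ⊆ B → ↑(η T) ⊆ B) {z : X} (hz : z ∉ B) :
    B.Pairwise fun a b => a ∈ ({b, z} : Finset X).powerset.biUnion η ∨
      b ∈ ({a, z} : Finset X).powerset.biUnion η := by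
  intro a ha b hb hab
  have haz : a ≠ z := ne_of_mem_of_not_mem ha hz
  have hbz : b ≠ z := ne_of_mem_of_not_mem hb hz
  obtain ⟨S', hS', hcard, hcover⟩ := hη {a, b, z}
  have hzS' : z ∈ S' := by
    by_contra hzS'
    exact hz (hB S' (fun x hx => by grind) (hcover (by simp)))
  have : a ∉ S' ∨ b ∉ S' := by
    by_contra! h
    have : ({a, b, z} : Finset X).card ≤ S'.card :=
      Finset.card_le_card (by simp [Finset.insert_subset_iff, h, hzS'])
    simp [Finset.card_insert_of_notMem, hab, haz, hbz] at this
    omega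
  simp only [Finset.mem_biUnion, Finset.mem_powerset]
  rcases this with haS' | hbS'
  · exact .inl ⟨S', fun x hx => by grind, hcover (by simp)⟩
  · exact .inr ⟨S', fun x hx => by grind, hcover (by simp)⟩

theorem HasCompressionScheme.mk_le_aleph_one {X : Type u} (h : HasCompressionScheme X 2) :
    #X ≤ ℵ₁ := by
  classical
  obtain ⟨η, hη⟩ := h
  by_contra! hX
  obtain ⟨A, hA⟩ := le_mk_iff_exists_set.mp hX.le
  obtain ⟨B, hAB, hB, hB_closed⟩ :=
    exists_superset_forall_finset_subset_mk_le η (aleph0_le_aleph 1) hA.le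
  obtain ⟨z, hz⟩ : ∃ z, z ∉ B := by
    by_contra! hBuniv
    rw [eq_univ_of_forall hBuniv, mk_univ] at hB
    exact hB.not_gt hX
  have hB_countable : B.Countable :=
    (pairwise_mem_or_mem_of_card_le_two hη hB_closed hz).countable_of_mem_or_mem
  exact (aleph0_lt_aleph_one.trans_le (hA ▸ mk_le_mk_of_subset hAB)).not_ge
    (le_aleph0_iff_set_countable.mpr hB_countable)

theorem hasCompressionScheme_two_iff {X : Type u} : HasCompressionScheme X 2 ↔ #X ≤ ℵ₁ :=
  ⟨HasCompressionScheme.mk_le_aleph_one, hasCompressionScheme_two_of_mk_le_aleph_one⟩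

/-- There exists a 2-size monotone compression scheme for the class of all
finite subsets of ℝ iff the continuum hypothesis holds, i.e. |ℝ| = ℵ₁. -/
theorem stmt_4 :
    (∃ η : Finset ℝ → Finset ℝ,
        ∀ S : Finset ℝ, ∃ S' ⊆ S, S'.card ≤ 2 ∧ S ⊆ η S') ↔
      Cardinal.mk ℝ = Cardinal.aleph 1 := by
  have hℵ₁ : ℵ₁ ≤ #ℝ := mk_real ▸ aleph_one_le_continuum
  exact hasCompressionScheme_two_iff.trans ⟨fun h => h.antisymm hℵ₁, le_of_eq⟩
end

section
/- Let p, q be integers with q ≥ 1 and p ≥ q+1, and let X be a set. If X has the (p→q→(q+1)) property, then the cardinality of X is at most ℵ_{p−2}. -/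
open Classical in
/-- X has the (p→q→r) property: there exist σ from the p-element subsets of X to the
q-element subsets of X and η from the q-element subsets of X to the finite subsets of X
such that for every p-element subset S: σ(S) ⊆ S and |η(σ(S)) ∩ S| ≥ r. -/
def HasPQR (X : Type*) (p q r : ℕ) : Prop :=
  ∃ σ η : Finset X → Finset X,
    ∀ S : Finset X, S.card = p →
      σ S ⊆ S ∧ (σ S).card = q ∧ r ≤ (η (σ S) ∩ S).card

/-!
A set mapping `G` on the finite subsets of `X` has free sets of size `n + 1` inside any set
of size `ℵ_n` (a finite-set version of the Kuratowski–Sierpiński free set theorem). Given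
`Y` of size `ℵ_(n+1)`, choose `Y₀ ⊆ Y` of size `ℵ_n`; the images under `G` of the finite
subsets of `Y₀` cover at most `ℵ_n` points, so some `x ∈ Y` avoids all of them and `Y₀`.
A free set `S'` inside `Y₀` for `a ↦ G a ∪ G (insert x a)` then extends to the free set
`insert x S'` for `G`.

If `|X| > ℵ_(p-2)` there is therefore a `p`-element set `S` free for `η`, and then
`η (σ S) ∩ S ⊆ σ S` has at most `q` elements.
-/

universe u

open Cardinal Set

variable {X : Type u} [DecidableEq X]

def IsFreeSet (G : Finset X → Finset X) (S : Finset X) : Prop :=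
  ∀ a ⊆ S, G a ∩ S ⊆ a

theorem isFreeSet_empty (G : Finset X → Finset X) : IsFreeSet G ∅ := by
  intro a _
  simp

theorem IsFreeSet.mono {G : Finset X → Finset X} {S T : Finset X} (hS : IsFreeSet G S)
    (hTS : T ⊆ S) : IsFreeSet G T :=
  fun a haT => (Finset.inter_subset_inter_left hTS).trans (hS a (haT.trans hTS))

theorem IsFreeSet.insert {G : Finset X → Finset X} {S : Finset X} {x : X}
    (hS : IsFreeSet (fun a => G a ∪ G (Insert.insert x a)) S) (hx : ∀ a ⊆ S, x ∉ G a) :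
    IsFreeSet G (Insert.insert x S) := by
  intro a ha y hy
  obtain ⟨hyG, hyS⟩ := Finset.mem_inter.1 hy
  by_cases hxa : x ∈ a
  · have hb : a.erase x ⊆ S := fun z hz =>
      (Finset.mem_insert.1 (ha (Finset.mem_of_mem_erase hz))).resolve_left
        (Finset.ne_of_mem_erase hz)
    rcases Finset.mem_insert.1 hyS with rfl | hyS
    · exact hxa
    · have hyG' : y ∈ G (a.erase x) ∪ G (Insert.insert x (a.erase x)) := by
        rw [Finset.insert_erase hxa]
        exact Finset.mem_union_right _ hyG
      exact Finset.mem_of_mem_erase (hS _ hb (Finset.mem_inter.2 ⟨hyG', hyS⟩))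
  · have haS : a ⊆ S := fun z hz =>
      (Finset.mem_insert.1 (ha hz)).resolve_left (ne_of_mem_of_not_mem hz hxa)
    rcases Finset.mem_insert.1 hyS with rfl | hyS
    · exact absurd hyG (hx a haS)
    · exact hS a haS (Finset.mem_inter.2 ⟨Finset.mem_union_left _ hyG, hyS⟩)

omit [DecidableEq X] in
theorem mk_iUnion_finset_le_s5 {ι : Type u} [Infinite ι] (f : ι → Finset X) :
    #(⋃ i, (f i : Set X)) ≤ #ι :=
  calc #(⋃ i, (f i : Set X)) ≤ #ι * ⨆ i, #(f i : Set X) := mk_iUnion_le _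
    _ ≤ #ι * ℵ₀ := by
      gcongr
      exact ciSup_le' fun i => (f i).finite_toSet.lt_aleph0.le
    _ = #ι := mul_aleph0_eq (infinite_iff.1 ‹_›)

theorem exists_isFreeSet_of_aleph_le (n : ℕ) (G : Finset X → Finset X) {Y : Set X}
    (hY : ℵ_ n ≤ #Y) : ∃ S : Finset X, ↑S ⊆ Y ∧ S.card = n + 1 ∧ IsFreeSet G S := by
  induction n generalizing G Y with
  | zero =>
    have hG : #(G ∅ : Set X) < #Y :=
      (G ∅).finite_toSet.lt_aleph0.trans_le (by simpa using hY)
    obtain ⟨x, hxY, hxG⟩ := sdiff_nonempty_of_mk_lt_mk hG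
    refine ⟨{x}, by simpa using hxY, rfl, ?_⟩
    rw [← Finset.insert_empty]
    exact (isFreeSet_empty _).insert fun a ha => by rwa [Finset.subset_empty.1 ha]
  | succ n ih =>
    classical
    obtain ⟨Y₀, hY₀Y, hY₀⟩ := le_mk_iff_exists_subset.1
      ((aleph_le_aleph.2 (Nat.cast_le.2 n.le_succ)).trans hY)
    have : Infinite Y₀ := infinite_iff.2 (hY₀ ▸ aleph0_le_aleph _)
    set Z : Set X := ⋃ t : Finset Y₀, ↑(G (t.map (Function.Embedding.subtype _)))
    have hGZ : ∀ a : Finset X, ↑a ⊆ Y₀ → ↑(G a) ⊆ Z := fun a ha =>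
      subset_iUnion_of_subset (a.subtype (· ∈ Y₀)) (by rw [Finset.subtype_map_of_mem ha])
    have hZ : #(Y₀ ∪ Z : Set X) < #Y :=
      calc #(Y₀ ∪ Z : Set X) ≤ #Y₀ + #Z := mk_union_le _ _
        _ ≤ ℵ_ n + ℵ_ n := by
          gcongr
          · exact hY₀.le
          · exact (mk_iUnion_finset_le_s5 _).trans (mk_finset_of_infinite Y₀ ▸ hY₀.le)
        _ = ℵ_ n := add_eq_self (aleph0_le_aleph _)
        _ < ℵ_ (n + 1 : ℕ) := aleph_lt_aleph.2 (Nat.cast_lt.2 n.lt_succ_self)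
        _ ≤ #Y := hY
    obtain ⟨x, hxY, hx⟩ := sdiff_nonempty_of_mk_lt_mk hZ
    obtain ⟨S, hSY₀, hScard, hS⟩ := ih (fun a => G a ∪ G (insert x a)) hY₀.ge
    have hxS : x ∉ S := fun h => hx (Or.inl (hSY₀ h))
    refine ⟨insert x S, ?_, by rw [Finset.card_insert_of_notMem hxS, hScard], ?_⟩
    · rw [Finset.coe_insert]
      exact insert_subset hxY (hSY₀.trans hY₀Y)
    · exact hS.insert fun a ha hxa =>
        hx (Or.inr (hGZ a ((Finset.coe_subset.2 ha).trans hSY₀) hxa))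

theorem stmt_5_general (p q : ℕ) (X : Type*)
    (h : HasPQR X p q (q + 1)) :
    Cardinal.mk X ≤ Cardinal.aleph (p - 2) := by
  classical
  obtain ⟨σ, η, hση⟩ := h
  by_contra! hX
  have hX' : ℵ_ (p - 2 + 1 : ℕ) ≤ #(univ : Set X) := by
    rw [mk_univ, Nat.cast_succ, ← succ_aleph, Ordinal.natCast_sub, Nat.cast_ofNat]
    exact Order.succ_le_of_lt hX
  obtain ⟨T, -, hTcard, hT⟩ := exists_isFreeSet_of_aleph_le _ η hX'
  obtain ⟨S, hST, hScard⟩ := Finset.exists_subset_card_eq (show p ≤ T.card by omega)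
  obtain ⟨hσS, hσcard, hηS⟩ := hση S hScard
  have hηS_le := Finset.card_le_card (hT.mono hST (σ S) hσS)
  omega

/-- If q ≥ 1, p ≥ q+1 and X has the (p→q→(q+1)) property then
|X| ≤ ℵ_{p-2}. -/
theorem stmt_5 (p q : ℕ) (hq : 1 ≤ q) (hp : q + 1 ≤ p) (X : Type*)
    (h : HasPQR X p q (q + 1)) :
    Cardinal.mk X ≤ Cardinal.aleph (p - 2) :=
  stmt_5_general p q X h
end

section
/- Let p, q be integers with q ≥ 1 and p ≥ q+1, and let X be a set. If X has the (p→q→(q+1)) property, then X has the (p→(p−1)→p) property. -/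
/-!
Since `η (σ S) ∩ S` has more than `q = |σ S|` elements, some `x ∈ S` outside `σ S` is recovered
by `η` from `σ S ⊆ S \ {x}`. So send `S` to `S \ {x}`, and recover from a `(p - 1)`-set `T`
the set `T` together with `η U` for every `q`-subset `U` of `T`: this contains `S`.
-/

open Finset

theorem Finset.subset_erase_union_biUnion_powersetCard {X : Type*} [DecidableEq X]
    {η : Finset X → Finset X} {S U : Finset X} {x : X} (hxS : x ∈ S) (hU : U ⊆ S.erase x)
    (hxU : x ∈ η U) :
    S ⊆ S.erase x ∪ ((S.erase x).powersetCard U.card).biUnion η :=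
  calc S = insert x (S.erase x) := (insert_erase hxS).symm
    _ ⊆ _ := insert_subset
      (mem_union_right _ (mem_biUnion.2 ⟨U, mem_powersetCard.2 ⟨hU, rfl⟩, hxU⟩))
      subset_union_left

theorem hasPQR_pred_self_of_exists_recovered {X : Type*} {p q : ℕ} (η : Finset X → Finset X)
    (h : ∀ S : Finset X, S.card = p → ∃ x ∈ S, ∃ U ⊆ S, x ∉ U ∧ U.card = q ∧ x ∈ η U) :
    HasPQR X p (p - 1) p := by
  classical
  refine ⟨fun S => if hS : S.card = p then S.erase (h S hS).choose else S,
    fun T => T ∪ (T.powersetCard q).biUnion η, fun S hS => ?_⟩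
  obtain ⟨hxS, U, hUS, hxU, rfl, hxηU⟩ := (h S hS).choose_spec
  simp only [dif_pos hS]
  refine ⟨erase_subset _ _, by rw [card_erase_of_mem hxS, hS], ?_⟩
  rw [inter_eq_right.2
    (subset_erase_union_biUnion_powersetCard hxS (subset_erase.2 ⟨hUS, hxU⟩) hxηU), hS]

theorem HasPQR.pred_self_of_lt {X : Type*} {p q r : ℕ} (h : HasPQR X p q r) (hqr : q < r) :
    HasPQR X p (p - 1) p := by
  classical
  obtain ⟨σ, η, hση⟩ := h
  refine hasPQR_pred_self_of_exists_recovered (q := q) η fun S hS => ?_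
  obtain ⟨hσS, hcard, hr⟩ := hση S hS
  obtain ⟨x, hx, hxσ⟩ := exists_mem_notMem_of_card_lt_card (hcard.symm ▸ hqr.trans_le hr)
  obtain ⟨hxη, hxS⟩ := mem_inter.1 hx
  exact ⟨x, hxS, σ S, hσS, hxσ, hcard, hxη⟩

theorem stmt_6_general (p q : ℕ) (X : Type*)
    (h : HasPQR X p q (q + 1)) :
    HasPQR X p (p - 1) p :=
  h.pred_self_of_lt (Nat.lt_succ_self q)

/-- If q ≥ 1, p ≥ q+1 and X has the (p→q→(q+1)) property then X has the
(p→(p-1)→p) property. -/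
theorem stmt_6 (p q : ℕ) (hq : 1 ≤ q) (hp : q + 1 ≤ p) (X : Type*)
    (h : HasPQR X p q (q + 1)) :
    HasPQR X p (p - 1) p :=
  stmt_6_general p q X h
end

section
/- Let F be a union bounded class of subsets of a set X. If F is weakly EMX-learnable, i.e., there exist d₀ ∈ ℕ and a (1/3,1/3)-EMX learner for F with sample size d₀, then F is EMX-learnable: for every ε, δ ∈ (0,1) there exist m ∈ ℕ and an (ε,δ)-EMX learner for F with sample size m. -/
open MeasureTheory

/-- F is union bounded if for all h₁, h₂ ∈ F there is h₃ ∈ F with h₁ ∪ h₂ ⊆ h₃. -/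
def UnionBounded {X : Type*} (F : Set (Set X)) : Prop :=
  ∀ h₁ ∈ F, ∀ h₂ ∈ F, ∃ h₃ ∈ F, h₁ ∪ h₂ ⊆ h₃

/-- The (countably supported) measure on X induced by a probability mass function P,
with every subset of X measurable (⊤ σ-algebra). -/
noncomputable def pmfMeasure {X : Type*} (P : PMF X) : @Measure X ⊤ :=
  @PMF.toMeasure X ⊤ P

/-- The m-fold product measure P^m on X^m. -/
noncomputable def pmfPow {X : Type*} (P : PMF X) (m : ℕ) :
    @Measure (Fin m → X) (@MeasurableSpace.pi (Fin m) (fun _ => X) (fun _ => ⊤)) :=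
  @Measure.pi (Fin m) (fun _ => X) _ (fun _ => ⊤) (fun _ => pmfMeasure P)

/-- Opt_P(F) = sup_{h ∈ F} P(h). -/
noncomputable def OptP {X : Type*} (P : PMF X) (F : Set (Set X)) : ENNReal :=
  ⨆ h ∈ F, pmfMeasure P h

/-- G : X^m → F is an (ε,δ)-EMX learner for F with sample size m if for every
countably supported distribution P over X,
P^m({S : Opt_P(F) − P(G(S)) ≥ ε}) ≤ δ. -/
def IsEMXLearner {X : Type*} (F : Set (Set X)) (m : ℕ)
    (G : (Fin m → X) → Set X) (ε δ : ℝ) : Prop :=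
  (∀ S, G S ∈ F) ∧
  ∀ P : PMF X,
    pmfPow P m {S | ENNReal.ofReal ε ≤ OptP P F - pmfMeasure P (G S)} ≤
      ENNReal.ofReal δ

/-!
Let `G` be an `(ε₀, δ₀)`-EMX learner with sample size `d`, where `ε₀, δ₀ < 1`, and fix `H ∈ F`
within `ε / 2` of the optimum. The boosted learner cuts its sample into `k` rounds of `r` blocks of
`d` points and returns a hypothesis of `F` (union boundedness provides one) containing the weak
learner's outputs on all subsamples. While the part `W` of `H` left uncovered has mass above
`ε / 2`, a block lands inside `W` with probability at least `P(W) ^ d`, and is then a sample from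
`P(· | W)`, for which `H` is optimal with value `1`; so with probability at least
`(1 - δ₀) (ε / 2) ^ d` the weak learner covers all but an `ε₀`-fraction of `W`. A round thus fails
to shrink the uncovered mass by the factor `ε₀` with probability at most
`(1 - (1 - δ₀) (ε / 2) ^ d) ^ r`, and by a union bound over the rounds the uncovered mass ends
below `max (ε / 2) (ε₀ ^ k) ≤ ε / 2` except with probability `k (1 - (1 - δ₀) (ε / 2) ^ d) ^ r ≤ δ`.

The events involved need not be measurable for the product σ-algebra, so probabilities on sample
spaces are computed with the discrete product `pmfPi`, whose measure agrees with `pmfPow` on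
every set.
-/

open scoped ENNReal

section Boosting

variable {α β X : Type*}

theorem pmfMeasure_apply (p : PMF α) (s : Set α) : pmfMeasure p s = p.toOuterMeasure s :=
  @PMF.toMeasure_apply_eq_toOuterMeasure_apply α ⊤ p s MeasurableSpace.measurableSet_top

theorem pmfMeasure_map_apply (p : PMF α) (f : α → β) (s : Set β) :
    pmfMeasure (p.map f) s = pmfMeasure p (f ⁻¹' s) := by
  rw [pmfMeasure_apply, pmfMeasure_apply, PMF.toOuterMeasure_map_apply]

theorem pmfMeasure_bind_apply (p : PMF α) (f : α → PMF β) (s : Set β) :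
    pmfMeasure (p.bind f) s = ∑' a, p a * pmfMeasure (f a) s := by
  simp only [pmfMeasure_apply, PMF.toOuterMeasure_bind_apply]

instance (p : PMF α) : IsProbabilityMeasure (pmfMeasure p) :=
  @PMF.toMeasure.isProbabilityMeasure α ⊤ p

theorem pmfMeasure_le_one (p : PMF α) (s : Set α) : pmfMeasure p s ≤ 1 := prob_le_one

theorem pmfMeasure_compl (p : PMF α) (s : Set α) : pmfMeasure p sᶜ = 1 - pmfMeasure p s :=
  prob_compl_eq_one_sub MeasurableSpace.measurableSet_top

noncomputable def pmfPi (p : PMF α) : (n : ℕ) → PMF (Fin n → α)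
  | 0 => PMF.pure Fin.elim0
  | n + 1 => p.bind fun x => (pmfPi p n).map (Fin.cons x)

theorem pmfMeasure_pmfPi_succ (p : PMF α) (n : ℕ) (s : Set (Fin (n + 1) → α)) :
    pmfMeasure (pmfPi p (n + 1)) s =
      ∑' x, p x * pmfMeasure (pmfPi p n) (Fin.cons (α := fun _ => α) x ⁻¹' s) := by
  simp only [pmfPi, pmfMeasure_bind_apply, pmfMeasure_map_apply]

theorem pmfMeasure_pmfPi_pi (p : PMF α) (n : ℕ) (A : Fin n → Set α) :
    pmfMeasure (pmfPi p n) (Set.univ.pi A) = ∏ i, pmfMeasure p (A i) := by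
  induction n with
  | zero =>
    rw [pmfMeasure_apply, (PMF.toOuterMeasure_apply_eq_one_iff _ _).2 (fun _ _ => by simp)]
    simp
  | succ n ih =>
    classical
    have hcons : ∀ x, Fin.cons (α := fun _ => α) x ⁻¹' Set.univ.pi A =
        if x ∈ A 0 then Set.univ.pi (fun i => A i.succ) else ∅ := by
      intro x
      ext g
      split_ifs with hx <;> simp [Fin.forall_fin_succ, hx]
    simp_rw [pmfMeasure_pmfPi_succ, hcons, Fin.prod_univ_succ, ← ih]
    rw [pmfMeasure_apply p, PMF.toOuterMeasure_apply, ← ENNReal.tsum_mul_right]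
    refine tsum_congr fun x => ?_
    by_cases hx : x ∈ A 0 <;> simp [hx]

theorem pmfPi_apply (p : PMF α) (n : ℕ) (f : Fin n → α) : pmfPi p n f = ∏ i, p (f i) := by
  have := pmfMeasure_pmfPi_pi p n (fun i => {f i})
  simp_rw [Set.univ_pi_singleton, pmfMeasure_apply, PMF.toOuterMeasure_apply_singleton] at this
  exact this

theorem PMF.map_equiv_apply (p : PMF α) (e : α ≃ β) (b : β) : p.map e b = p (e.symm b) := by
  rw [PMF.map_apply, tsum_eq_single (e.symm b) fun a ha => if_neg (by rintro rfl; simp at ha)]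
  simp

def finUncurry (a b : ℕ) : (Fin a → Fin b → α) ≃ (Fin (a * b) → α) :=
  (Equiv.curry _ _ _).symm.trans (finProdFinEquiv.arrowCongr (Equiv.refl α))

@[simp]
theorem finUncurry_apply_finProdFinEquiv {a b : ℕ} (F : Fin a → Fin b → α) (i : Fin a)
    (j : Fin b) : finUncurry a b F (finProdFinEquiv (i, j)) = F i j := by
  simp [finUncurry]

theorem pmfPi_map_finUncurry (p : PMF α) (a b : ℕ) :
    (pmfPi (pmfPi p b) a).map (finUncurry a b) = pmfPi p (a * b) := by
  ext g
  obtain ⟨F, rfl⟩ := (finUncurry a b).surjective g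
  rw [PMF.map_equiv_apply, Equiv.symm_apply_apply, pmfPi_apply, pmfPi_apply,
    ← finProdFinEquiv.prod_comp, Fintype.prod_prod_type]
  simp [pmfPi_apply]

theorem pmfMeasure_pmfPi_mul (p : PMF α) (a b : ℕ) (s : Set (Fin (a * b) → α)) :
    pmfMeasure (pmfPi p (a * b)) s = pmfMeasure (pmfPi (pmfPi p b) a) (finUncurry a b ⁻¹' s) := by
  rw [← pmfPi_map_finUncurry, pmfMeasure_map_apply]

theorem pmfPow_eq_pmfMeasure_pmfPi (P : PMF X) (n : ℕ) (s : Set (Fin n → X)) :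
    pmfPow P n s = pmfMeasure (pmfPi P n) s := by
  let _ : MeasurableSpace X := ⊤
  have hpi : pmfPow P n = (pmfPi P n).toMeasure := by
    unfold pmfPow
    refine Measure.pi_eq (μ := fun _ => pmfMeasure P) fun A _ => ?_
    rw [PMF.toMeasure_apply_eq_toOuterMeasure, ← pmfMeasure_apply, pmfMeasure_pmfPi_pi]
  rw [hpi, PMF.toMeasure_apply_eq_toOuterMeasure, pmfMeasure_apply]

theorem pmfMeasure_eq_mul_of_apply_eq {p q : PMF α} {c : ℝ≥0∞} {s : Set α}
    (h : ∀ x ∈ s, p x = c * q x) : pmfMeasure p s = c * pmfMeasure q s := by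
  rw [pmfMeasure_apply, pmfMeasure_apply, PMF.toOuterMeasure_apply, PMF.toOuterMeasure_apply,
    ← ENNReal.tsum_mul_left]
  refine tsum_congr fun x => ?_
  by_cases hx : x ∈ s <;> simp [hx, h]

theorem exists_mem_support_of_pmfMeasure_ne_zero {p : PMF α} {s : Set α}
    (hs : pmfMeasure p s ≠ 0) : ∃ a ∈ s, a ∈ p.support := by
  rw [pmfMeasure_apply, Ne, PMF.toOuterMeasure_apply_eq_zero_iff, Set.not_disjoint_iff] at hs
  obtain ⟨a, ha, has⟩ := hs
  exact ⟨a, has, ha⟩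

noncomputable def pmfCond (p : PMF α) (s : Set α) (hs : pmfMeasure p s ≠ 0) : PMF α :=
  p.filter s (exists_mem_support_of_pmfMeasure_ne_zero hs)

section Cond

variable {p : PMF α} {s : Set α} (hs : pmfMeasure p s ≠ 0)

theorem apply_eq_pmfMeasure_mul_pmfCond {x : α} (hx : x ∈ s) :
    p x = pmfMeasure p s * pmfCond p s hs x := by
  rw [pmfCond, PMF.filter_apply, Set.indicator_of_mem hx, ← PMF.toOuterMeasure_apply,
    ← pmfMeasure_apply, mul_left_comm, ENNReal.mul_inv_cancel hs (measure_ne_top _ _), mul_one]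

theorem pmfMeasure_pmfCond_self : pmfMeasure (pmfCond p s hs) s = 1 := by
  rw [pmfMeasure_apply, PMF.toOuterMeasure_apply_eq_one_iff, pmfCond, PMF.support_filter]
  exact Set.inter_subset_left

theorem pmfMeasure_eq_mul_pmfCond {t : Set α} (ht : t ⊆ s) :
    pmfMeasure p t = pmfMeasure p s * pmfMeasure (pmfCond p s hs) t :=
  pmfMeasure_eq_mul_of_apply_eq fun _ hx => apply_eq_pmfMeasure_mul_pmfCond hs (ht hx)

theorem pmfMeasure_pmfPi_eq_mul_pmfCond {n : ℕ} {t : Set (Fin n → α)}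
    (ht : t ⊆ Set.univ.pi fun _ => s) :
    pmfMeasure (pmfPi p n) t = pmfMeasure p s ^ n * pmfMeasure (pmfPi (pmfCond p s hs) n) t := by
  refine pmfMeasure_eq_mul_of_apply_eq fun f hf => ?_
  simp_rw [pmfPi_apply, ← Fin.prod_const, ← Finset.prod_mul_distrib]
  exact Finset.prod_congr rfl fun i _ => apply_eq_pmfMeasure_mul_pmfCond hs (ht hf i trivial)

theorem pmfMeasure_pmfPi_pmfCond_compl_pi (n : ℕ) :
    pmfMeasure (pmfPi (pmfCond p s hs) n) (Set.univ.pi fun _ => s)ᶜ = 0 := by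
  simp [pmfMeasure_compl, pmfMeasure_pmfPi_pi, pmfMeasure_pmfCond_self hs]

end Cond

theorem Fin.iUnion_cons {Y : Type*} {k : ℕ} (U : Y → Set α) (y : Y) (g : Fin k → Y) :
    ⋃ j, U (Fin.cons (α := fun _ => Y) y g j) = U y ∪ ⋃ j, U (g j) := by
  ext x
  simp [Fin.exists_fin_succ]

theorem pmfMeasure_pmfPi_uncovered_gt_le {Y : Type*} {_ : MeasurableSpace X} (μ : Measure X)
    (Q : PMF Y) (U : Y → Set X) {H : Set X} {θ c β : ℝ≥0∞}
    (hround : ∀ W ⊆ H, θ < μ W → pmfMeasure Q {y | μ W * c < μ (W \ U y)} ≤ β) (k : ℕ)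
    {W : Set X} (hW : W ⊆ H) :
    pmfMeasure (pmfPi Q k) {f | max θ (μ W * c ^ k) < μ (W \ ⋃ j, U (f j))} ≤ k * β := by
  induction k generalizing W with
  | zero => simp
  | succ k ih =>
    by_cases hθW : μ W ≤ θ
    · have hempty : {f : Fin (k + 1) → Y | max θ (μ W * c ^ (k + 1)) < μ (W \ ⋃ j, U (f j))} = ∅ :=
        Set.eq_empty_of_forall_notMem fun f hf =>
          ((measure_mono Set.sdiff_subset).trans (hθW.trans (le_max_left _ _))).not_gt hf
      rw [hempty, measure_empty]
      exact zero_le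
    set bad := {y | μ W * c < μ (W \ U y)}
    have hstep : ∀ y, Q y * pmfMeasure (pmfPi Q k) (Fin.cons (α := fun _ => Y) y ⁻¹'
          {f | max θ (μ W * c ^ (k + 1)) < μ (W \ ⋃ j, U (f j))}) ≤
        bad.indicator Q y + Q y * (k * β) := by
      intro y
      by_cases hy : y ∈ bad
      · rw [Set.indicator_of_mem hy]
        exact (mul_le_of_le_one_right' (pmfMeasure_le_one _ _)).trans le_self_add
      rw [Set.indicator_of_notMem hy, zero_add]
      gcongr
      refine (measure_mono fun g hg => ?_).trans (ih (W := W \ U y) (Set.sdiff_subset.trans hW))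
      simp only [Set.mem_preimage, Set.mem_ofPred_eq, Fin.iUnion_cons, ← Set.sdiff_sdiff] at hg ⊢
      refine lt_of_le_of_lt (max_le_max_left _ ?_) hg
      rw [pow_succ', ← mul_assoc]
      exact mul_le_mul_left (not_lt.1 hy) _
    calc pmfMeasure (pmfPi Q (k + 1)) {f | max θ (μ W * c ^ (k + 1)) < μ (W \ ⋃ j, U (f j))}
        ≤ ∑' y, (bad.indicator Q y + Q y * (k * β)) := by
          rw [pmfMeasure_pmfPi_succ]; exact ENNReal.tsum_le_tsum hstep
      _ = pmfMeasure Q bad + k * β := by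
          rw [ENNReal.tsum_add, ENNReal.tsum_mul_right, PMF.tsum_coe, one_mul, pmfMeasure_apply,
            PMF.toOuterMeasure_apply]
      _ ≤ (k + 1 : ℕ) * β := by
          rw [Nat.cast_succ, add_mul, one_mul, add_comm]
          gcongr
          exact hround W hW (not_le.1 hθW)

def subsampleUnion {d m : ℕ} (G : (Fin d → X) → Set X) (S : Fin m → X) : Set X :=
  ⋃ B : Fin d → Fin m, G (S ∘ B)

theorem subsampleUnion_comp_subset {d m n : ℕ} (G : (Fin d → X) → Set X) (S : Fin m → X)
    (e : Fin n → Fin m) : subsampleUnion G (S ∘ e) ⊆ subsampleUnion G S :=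
  Set.iUnion_subset fun B => Set.subset_iUnion_of_subset (e ∘ B) subset_rfl

theorem optP_le_one (P : PMF X) (F : Set (Set X)) : OptP P F ≤ 1 :=
  iSup₂_le fun _ _ => pmfMeasure_le_one _ _

theorem UnionBounded.exists_iUnion_subset {F : Set (Set X)} (hF : UnionBounded F)
    (hne : F.Nonempty) {ι : Type*} [Finite ι] (g : ι → Set X) (hg : ∀ i, g i ∈ F) :
    ∃ h ∈ F, ⋃ i, g i ⊆ h := by
  classical
  have hfin : ∀ s : Finset ι, ∃ h ∈ F, ∀ i ∈ s, g i ⊆ h := by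
    intro s
    induction s using Finset.induction_on with
    | empty => exact ⟨hne.some, hne.some_mem, by simp⟩
    | insert i s _ ih =>
      obtain ⟨h, hh, hs⟩ := ih
      obtain ⟨h', hh', hsub⟩ := hF _ (hg i) h hh
      refine ⟨h', hh', (Finset.forall_mem_insert _ _ _).2 ⟨Set.subset_union_left.trans hsub, ?_⟩⟩
      exact fun j hj => (hs j hj).trans (Set.subset_union_right.trans hsub)
  have := Fintype.ofFinite ι
  obtain ⟨h, hh, hs⟩ := hfin Finset.univ
  exact ⟨h, hh, Set.iUnion_subset fun i => hs i (Finset.mem_univ i)⟩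

noncomputable def boost {d m : ℕ} (F : Set (Set X)) (G : (Fin d → X) → Set X) (S : Fin m → X) :
    Set X :=
  Classical.epsilon fun h => h ∈ F ∧ subsampleUnion G S ⊆ h

theorem boost_spec [Nonempty X] {F : Set (Set X)} (hF : UnionBounded F) {d m : ℕ}
    {G : (Fin d → X) → Set X} (hG : ∀ B, G B ∈ F) (S : Fin m → X) :
    boost F G S ∈ F ∧ subsampleUnion G S ⊆ boost F G S :=
  Classical.epsilon_spec
    (UnionBounded.exists_iUnion_subset hF ⟨_, hG fun _ => Classical.arbitrary X⟩ _ fun _ => hG _)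

theorem iUnion_subsampleUnion_subset_boost [Nonempty X] {F : Set (Set X)} (hF : UnionBounded F)
    {d k m : ℕ} {G : (Fin d → X) → Set X} (hG : ∀ B, G B ∈ F) (f : Fin k → Fin m → X) :
    ⋃ j, subsampleUnion G (f j) ⊆ boost F G (finUncurry k m f) := by
  refine Set.iUnion_subset fun j => ?_
  have hfj : f j = finUncurry k m f ∘ fun p => finProdFinEquiv (j, p) := by
    ext p; simp
  rw [hfj]
  exact (subsampleUnion_comp_subset G _ _).trans (boost_spec hF hG _).2

theorem exists_mem_optP_lt_add (P : PMF X) {F : Set (Set X)} (hF : F.Nonempty) {η : ℝ≥0∞}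
    (hη : η ≠ 0) : ∃ h ∈ F, OptP P F < pmfMeasure P h + η := by
  by_contra! hcon
  have : OptP P F + η ≤ OptP P F := by
    rw [OptP, ENNReal.biSup_add hF]
    exact iSup₂_le hcon
  exact this.not_gt (ENNReal.lt_add_right (ne_top_of_le_ne_top ENNReal.one_ne_top
    (optP_le_one P F)) hη)

theorem optP_sub_lt_of_pmfMeasure_sdiff_le {P : PMF X} {F : Set (Set X)} {H A : Set X}
    {θ η : ℝ≥0∞} (hη : η ≠ 0) (hH : OptP P F < pmfMeasure P H + η) (hA : pmfMeasure P (H \ A) ≤ θ) :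
    OptP P F - pmfMeasure P A < θ + η := by
  have hlt : OptP P F < pmfMeasure P A + (θ + η) :=
    calc OptP P F < pmfMeasure P H + η := hH
      _ ≤ pmfMeasure P (H \ A) + pmfMeasure P A + η := by
        gcongr
        exact tsub_le_iff_right.1 le_measure_sdiff
      _ ≤ pmfMeasure P A + (θ + η) := by rw [add_comm (pmfMeasure P _), add_assoc]; gcongr
  rcases le_total (pmfMeasure P A) (OptP P F) with hle | hle
  · exact ENNReal.sub_lt_of_lt_add hle (by rwa [add_comm] at hlt)
  · rw [tsub_eq_zero_of_le hle]
    exact (pos_iff_ne_zero.2 hη).trans_le le_add_self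

section Learner

variable {F : Set (Set X)} {d : ℕ} {G : (Fin d → X) → Set X} {ε₀ δ₀ : ℝ}

theorem le_pmfMeasure_pmfPi_sdiff_le_of_isEMXLearner (hG : IsEMXLearner F d G ε₀ δ₀) (P : PMF X)
    {H W : Set X} (hH : H ∈ F) (hWH : W ⊆ H) (hW : pmfMeasure P W ≠ 0) :
    (1 - ENNReal.ofReal δ₀) * pmfMeasure P W ^ d ≤
      pmfMeasure (pmfPi P d) {B | pmfMeasure P (W \ G B) ≤ pmfMeasure P W * ENNReal.ofReal ε₀} := by
  set Q := pmfCond P W hW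
  have hOpt : OptP Q F = 1 := by
    refine le_antisymm (optP_le_one Q F) ?_
    calc 1 = pmfMeasure Q W := (pmfMeasure_pmfCond_self hW).symm
      _ ≤ pmfMeasure Q H := measure_mono hWH
      _ ≤ OptP Q F := le_iSup₂ (f := fun h _ => pmfMeasure Q h) H hH
  set good := {B | ENNReal.ofReal ε₀ ≤ OptP Q F - pmfMeasure Q (G B)}ᶜ
  have hgood : 1 - ENNReal.ofReal δ₀ ≤ pmfMeasure (pmfPi Q d) good := by
    rw [pmfMeasure_compl, ← pmfPow_eq_pmfMeasure_pmfPi]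
    exact tsub_le_tsub_left (hG.2 Q) 1
  have hgood_sub : good ⊆ {B | pmfMeasure P (W \ G B) ≤ pmfMeasure P W * ENNReal.ofReal ε₀} := by
    intro B hB
    simp only [good, Set.mem_compl_iff, Set.mem_ofPred_eq, hOpt, not_le] at hB ⊢
    rw [pmfMeasure_eq_mul_pmfCond hW Set.sdiff_subset]
    gcongr
    calc pmfMeasure Q (W \ G B) ≤ pmfMeasure Q (G B)ᶜ := measure_mono fun x hx => hx.2
      _ = 1 - pmfMeasure Q (G B) := pmfMeasure_compl Q _
      _ ≤ ENNReal.ofReal ε₀ := hB.le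
  calc (1 - ENNReal.ofReal δ₀) * pmfMeasure P W ^ d
      ≤ pmfMeasure P W ^ d * pmfMeasure (pmfPi Q d) good := by rw [mul_comm]; gcongr
    _ = pmfMeasure P W ^ d * pmfMeasure (pmfPi Q d) (good ∩ Set.univ.pi fun _ => W) := by
      rw [measure_inter_conull (pmfMeasure_pmfPi_pmfCond_compl_pi hW d)]
    _ = pmfMeasure (pmfPi P d) (good ∩ Set.univ.pi fun _ => W) :=
      (pmfMeasure_pmfPi_eq_mul_pmfCond hW Set.inter_subset_right).symm
    _ ≤ _ := measure_mono (Set.inter_subset_left.trans hgood_sub)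

theorem pmfMeasure_pmfPi_round_fail_le_of_isEMXLearner (hG : IsEMXLearner F d G ε₀ δ₀) (P : PMF X)
    {H W : Set X} (hH : H ∈ F) (hWH : W ⊆ H) {θ : ℝ≥0∞} (hθ : θ < pmfMeasure P W) (r : ℕ) :
    pmfMeasure (pmfPi P (r * d))
        {g | pmfMeasure P W * ENNReal.ofReal ε₀ < pmfMeasure P (W \ subsampleUnion G g)} ≤
      (1 - (1 - ENNReal.ofReal δ₀) * θ ^ d) ^ r := by
  set good := {B | pmfMeasure P (W \ G B) ≤ pmfMeasure P W * ENNReal.ofReal ε₀}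
  have hfail : finUncurry r d ⁻¹'
      {g | pmfMeasure P W * ENNReal.ofReal ε₀ < pmfMeasure P (W \ subsampleUnion G g)} ⊆
      Set.univ.pi fun _ => goodᶜ := by
    intro y hy l _ hl
    have hblock : G (y l) ⊆ subsampleUnion G (finUncurry r d y) :=
      Set.subset_iUnion_of_subset (fun c => finProdFinEquiv (l, c)) (by simp [Function.comp_def])
    exact (measure_mono (Set.sdiff_subset_sdiff_right hblock)).trans hl |>.not_gt hy
  have hgood := le_pmfMeasure_pmfPi_sdiff_le_of_isEMXLearner hG P hH hWH (ne_bot_of_gt hθ)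
  rw [pmfMeasure_pmfPi_mul]
  refine (measure_mono hfail).trans ?_
  rw [pmfMeasure_pmfPi_pi, Finset.prod_const, Finset.card_univ, Fintype.card_fin, pmfMeasure_compl]
  gcongr
  exact le_trans (by gcongr) hgood

theorem isEMXLearner_boost [Nonempty X] (hF : UnionBounded F) (hG : IsEMXLearner F d G ε₀ δ₀)
    {ε δ : ℝ} (hε : 0 < ε) {k r : ℕ} (hk : ENNReal.ofReal ε₀ ^ k ≤ ENNReal.ofReal (ε / 2))
    (hr : k * (1 - (1 - ENNReal.ofReal δ₀) * ENNReal.ofReal (ε / 2) ^ d) ^ r ≤ ENNReal.ofReal δ) :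
    IsEMXLearner F (k * (r * d)) (boost F G) ε δ := by
  refine ⟨fun S => (boost_spec hF hG.1 S).1, fun P => ?_⟩
  set θ := ENNReal.ofReal (ε / 2)
  have hθ : θ ≠ 0 := (ENNReal.ofReal_pos.2 (half_pos hε)).ne'
  obtain ⟨H, hH, hOpt⟩ :=
    exists_mem_optP_lt_add P ⟨_, hG.1 fun _ => Classical.arbitrary X⟩ hθ
  have hincl : finUncurry k (r * d) ⁻¹'
      {S | ENNReal.ofReal ε ≤ OptP P F - pmfMeasure P (boost F G S)} ⊆
      {f | max θ (pmfMeasure P H * ENNReal.ofReal ε₀ ^ k) <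
        pmfMeasure P (H \ ⋃ j, subsampleUnion G (f j))} := by
    intro f hf
    simp only [Set.mem_preimage, Set.mem_ofPred_eq] at hf ⊢
    by_contra! hle
    have hrem : pmfMeasure P (H \ boost F G (finUncurry k (r * d) f)) ≤ θ :=
      (measure_mono (Set.sdiff_subset_sdiff_right
        (iUnion_subsampleUnion_subset_boost hF hG.1 f))).trans <| hle.trans <| max_le le_rfl <|
        (mul_le_of_le_one_left' (pmfMeasure_le_one P H)).trans hk
    refine (optP_sub_lt_of_pmfMeasure_sdiff_le hθ hOpt hrem).not_ge ?_
    rwa [← ENNReal.ofReal_add (half_pos hε).le (half_pos hε).le, add_halves]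
  calc pmfPow P (k * (r * d)) {S | ENNReal.ofReal ε ≤ OptP P F - pmfMeasure P (boost F G S)}
      ≤ pmfMeasure (pmfPi (pmfPi P (r * d)) k) {f | max θ (pmfMeasure P H * ENNReal.ofReal ε₀ ^ k) <
          pmfMeasure P (H \ ⋃ j, subsampleUnion G (f j))} := by
        rw [pmfPow_eq_pmfMeasure_pmfPi, pmfMeasure_pmfPi_mul]
        exact measure_mono hincl
    _ ≤ k * (1 - (1 - ENNReal.ofReal δ₀) * θ ^ d) ^ r :=
        pmfMeasure_pmfPi_uncovered_gt_le _ _ _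
          (fun W hWH hθW => pmfMeasure_pmfPi_round_fail_le_of_isEMXLearner hG P hH hWH hθW r) k
          subset_rfl
    _ ≤ ENNReal.ofReal δ := hr

theorem exists_isEMXLearner_of_weak (hF : UnionBounded F) (hG : IsEMXLearner F d G ε₀ δ₀)
    (hε₀ : ε₀ < 1) (hδ₀ : δ₀ < 1) {ε δ : ℝ} (hε : 0 < ε) (hδ : 0 < δ) :
    ∃ (m : ℕ) (G' : (Fin m → X) → Set X), IsEMXLearner F m G' ε δ := by
  rcases isEmpty_or_nonempty X with hX | hX
  · exact ⟨1, fun S => isEmptyElim (S 0), fun S => isEmptyElim (S 0),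
      fun P => isEmptyElim P.support_nonempty.some⟩
  obtain ⟨k, hk⟩ := ((ENNReal.tendsto_pow_atTop_nhds_zero_of_lt_one
    (ENNReal.ofReal_lt_one.2 hε₀)).eventually (ge_mem_nhds (ENNReal.ofReal_pos.2
      (half_pos hε)))).exists
  set a := (1 - ENNReal.ofReal δ₀) * ENNReal.ofReal (ε / 2) ^ d
  have ha : a ≠ 0 := mul_ne_zero (tsub_pos_iff_lt.2 (ENNReal.ofReal_lt_one.2 hδ₀)).ne'
    (pow_ne_zero _ (ENNReal.ofReal_pos.2 (half_pos hε)).ne')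
  have hlim : Filter.Tendsto (fun r => (k : ℝ≥0∞) * (1 - a) ^ r) Filter.atTop (nhds 0) := by
    simpa using ENNReal.Tendsto.const_mul (ENNReal.tendsto_pow_atTop_nhds_zero_of_lt_one
      (ENNReal.sub_lt_self ENNReal.one_ne_top one_ne_zero ha)) (Or.inr (ENNReal.natCast_ne_top k))
  obtain ⟨r, hr⟩ := (hlim.eventually (ge_mem_nhds (ENNReal.ofReal_pos.2 hδ))).exists
  exact ⟨_, _, isEMXLearner_boost hF hG hε hk hr⟩

end Learner

end Boosting

/-- If F is union bounded and weakly EMX-learnable (there is a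
(1/3,1/3)-EMX learner for F with some sample size d₀), then F is EMX-learnable: for
every ε, δ ∈ (0,1) there is an (ε,δ)-EMX learner for F with some sample size m. -/
theorem stmt_13 {X : Type*} (F : Set (Set X)) (hF : UnionBounded F)
    (hweak : ∃ (d₀ : ℕ) (G : (Fin d₀ → X) → Set X),
      IsEMXLearner F d₀ G (1 / 3) (1 / 3)) :
    ∀ ε δ : ℝ, ε ∈ Set.Ioo (0 : ℝ) 1 → δ ∈ Set.Ioo (0 : ℝ) 1 →
      ∃ (m : ℕ) (G : (Fin m → X) → Set X), IsEMXLearner F m G ε δ := by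
  obtain ⟨d₀, G, hG⟩ := hweak
  intro ε δ hε hδ
  exact exists_isEMXLearner_of_weak hF hG (by norm_num) (by norm_num) hε.1 hδ.1
end

section
/- For all d, k ∈ ℕ, the following are equivalent: (a) every class F of subsets of any set X with VC dimension d has, for every m ∈ ℕ, an m→k monotone compression scheme; (b) every class F of subsets of any set X with VC dimension d has, for every m ∈ ℕ, a proper sample compression scheme of size k for samples of size at most m. -/
universe u

/-- An m→d monotone compression scheme for a class F of subsets of X. -/
def MonCompScheme {X : Type*} (F : Set (Set X)) (m d : ℕ) (η : List X → Set X) : Prop :=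
  (∀ l : List X, l.length ≤ d → η l ∈ F) ∧
  ∀ m' ≤ m, ∀ h ∈ F, ∀ x : Fin m' → X, (∀ i, x i ∈ h) →
    ∃ k, k ≤ d ∧ ∃ idx : Fin k → Fin m', ∀ j, x j ∈ η (List.ofFn (x ∘ idx))

/-- A finite set A ⊆ X is shattered by F if for every B ⊆ A there is h ∈ F with
h ∩ A = B. -/
def Shatters {X : Type*} (F : Set (Set X)) (A : Finset X) : Prop :=
  ∀ B ⊆ A, ∃ h ∈ F, h ∩ (A : Set X) = (B : Set X)

/-- The VC dimension of F: the supremum of the cardinalities of finite sets shattered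
by F. -/
noncomputable def VCDim {X : Type*} (F : Set (Set X)) : ℕ∞ :=
  ⨆ (A : Finset X) (_ : Shatters F A), (A.card : ℕ∞)

open Classical in
/-- A proper sample compression scheme of size d for a class H of subsets of X, for
samples of size at most m. -/
def ProperCompScheme {X : Type*} (H : Set (Set X)) (m d : ℕ)
    (κ : List (X × Bool) → Set X) : Prop :=
  (∀ l : List (X × Bool), l.length ≤ d → κ l ∈ H) ∧
  ∀ m' ≤ m, ∀ h ∈ H, ∀ x : Fin m' → X,
    ∃ k, k ≤ d ∧ ∃ idx : Fin k → Fin m',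
      ∀ j, (x j ∈ κ (List.ofFn fun t => (x (idx t), decide (x (idx t) ∈ h))) ↔ x j ∈ h)

/-!
Replace `F` by the class of graphs `{(x, b) | x ∈ h ↔ b}` of the indicator functions of its
members. A sample labelled by `h` is then an unlabelled sample inside the member graph of `h`,
and the VC dimension does not change: a set shattered by the graphs carries one label per point
(some graph contains all of it), so it projects bijectively onto a set shattered by `F`. Hence a
monotone scheme for the graphs is a proper scheme for `F`, reading `h` off its graph at label
`true`. Conversely, a proper scheme fed with positively labelled points only is a monotone scheme.
-/

section Shatters

variable {X Y : Type*}

theorem shatters_iff_forall_exists_mem_iff {F : Set (Set X)} {A : Finset X} :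
    Shatters F A ↔ ∀ P : X → Prop, ∃ h ∈ F, ∀ a ∈ A, (a ∈ h ↔ P a) := by
  classical
  constructor
  · intro hA P
    obtain ⟨h, hF, hhA⟩ := hA (A.filter P) (Finset.filter_subset P A)
    refine ⟨h, hF, fun a ha => ?_⟩
    simpa [ha] using Set.ext_iff.mp hhA a
  · intro hA B hB
    obtain ⟨h, hF, hh⟩ := hA (· ∈ B)
    refine ⟨h, hF, Set.ext fun a => ?_⟩
    by_cases ha : a ∈ A
    · simp [ha, hh a ha]
    · simpa [ha] using fun haB => ha (hB haB)

theorem vcDim_le_vcDim {F : Set (Set X)} {G : Set (Set Y)}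
    (hFG : ∀ A, Shatters F A → ∃ B, Shatters G B ∧ A.card ≤ B.card) :
    VCDim F ≤ VCDim G :=
  iSup₂_le fun A hA =>
    let ⟨B, hB, hcard⟩ := hFG A hA
    le_iSup₂_of_le B hB (by exact_mod_cast hcard)

end Shatters

section IndicatorGraph

variable {X : Type*}

def indicatorGraph (h : Set X) : Set (X × Bool) := {p | p.1 ∈ h ↔ p.2 = true}

@[simp]
theorem mem_indicatorGraph {h : Set X} {p : X × Bool} :
    p ∈ indicatorGraph h ↔ (p.1 ∈ h ↔ p.2 = true) := Iff.rfl

@[simp]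
theorem preimage_indicatorGraph (h : Set X) :
    (fun x => (x, true)) ⁻¹' indicatorGraph h = h := by
  ext; simp

variable {F : Set (Set X)}

theorem Shatters.indicatorGraph_map {A : Finset X} (hA : Shatters F A) :
    Shatters (indicatorGraph '' F) (A.map (Function.Embedding.sectL X true)) := by
  rw [shatters_iff_forall_exists_mem_iff] at hA ⊢
  intro P
  obtain ⟨h, hF, hh⟩ := hA fun x => P (x, true)
  refine ⟨_, Set.mem_image_of_mem _ hF, ?_⟩
  simpa using hh

theorem Shatters.injOn_fst {A : Finset (X × Bool)} (hA : Shatters (indicatorGraph '' F) A) :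
    Set.InjOn Prod.fst (A : Set (X × Bool)) := by
  rw [shatters_iff_forall_exists_mem_iff] at hA
  obtain ⟨_, ⟨h, -, rfl⟩, hh⟩ := hA fun _ => True
  rintro ⟨x, b⟩ hp ⟨y, c⟩ hq (rfl : x = y)
  have hb := hh _ hp
  have hc := hh _ hq
  simp only [mem_indicatorGraph, iff_true] at hb hc
  cases b <;> cases c <;> simp_all

theorem Shatters.of_indicatorGraph [DecidableEq X] {A : Finset (X × Bool)}
    (hA : Shatters (indicatorGraph '' F) A) : Shatters F (A.image Prod.fst) := by
  rw [shatters_iff_forall_exists_mem_iff] at hA ⊢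
  intro P
  obtain ⟨_, ⟨h, hF, rfl⟩, hh⟩ := hA fun p => (P p.1 ↔ p.2 = true)
  refine ⟨h, hF, ?_⟩
  simp only [Finset.mem_image]
  rintro _ ⟨⟨x, b⟩, hp, rfl⟩
  have := hh _ hp
  cases b <;> simpa [not_iff_not] using this

theorem vcDim_image_indicatorGraph : VCDim (indicatorGraph '' F) = VCDim F := by
  classical
  exact le_antisymm
    (vcDim_le_vcDim fun A hA =>
      ⟨_, hA.of_indicatorGraph, (Finset.card_image_of_injOn hA.injOn_fst).ge⟩)
    (vcDim_le_vcDim fun A hA => ⟨_, hA.indicatorGraph_map, (Finset.card_map _).ge⟩)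

end IndicatorGraph

section Schemes

variable {X : Type*} {F : Set (Set X)} {m k : ℕ}

open Classical in
theorem ProperCompScheme.monCompScheme {κ : List (X × Bool) → Set X}
    (hκ : ProperCompScheme F m k κ) :
    MonCompScheme F m k fun l => κ (l.map fun x => (x, true)) := by
  refine ⟨fun l hl => hκ.1 _ (by simpa using hl), fun m' hm' h hh x hx => ?_⟩
  obtain ⟨k', hk', idx, hidx⟩ := hκ.2 m' hm' h hh x
  refine ⟨k', hk', idx, fun j => ?_⟩
  -- every point of the sample lies in `h`, so all labels are `true`
  have hlabels : (List.ofFn (x ∘ idx)).map (fun x => (x, true)) =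
      List.ofFn fun t => (x (idx t), decide (x (idx t) ∈ h)) := by
    simp [List.map_ofFn, Function.comp_def, hx]
  simpa only [hlabels] using (hidx j).mpr (hx j)

open Classical in
theorem MonCompScheme.properCompScheme {η : List (X × Bool) → Set (X × Bool)}
    (hη : MonCompScheme (indicatorGraph '' F) m k η) :
    ProperCompScheme F m k fun l => (fun x => (x, true)) ⁻¹' η l := by
  refine ⟨fun l hl => ?_, fun m' hm' h hh x => ?_⟩
  · obtain ⟨g, hg, hgl⟩ := hη.1 l hl
    simpa [← hgl] using hg
  · let labelled : Fin m' → X × Bool := fun i => (x i, decide (x i ∈ h))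
    obtain ⟨k', hk', idx, hidx⟩ :=
      hη.2 m' hm' _ (Set.mem_image_of_mem _ hh) labelled (by simp [labelled])
    refine ⟨k', hk', idx, fun j => ?_⟩
    obtain ⟨g, -, hgl⟩ := hη.1 (List.ofFn (labelled ∘ idx)) (by simpa using hk')
    have hj := hidx j
    change x j ∈ (fun x => (x, true)) ⁻¹' η (List.ofFn (labelled ∘ idx)) ↔ x j ∈ h
    rw [← hgl] at hj ⊢
    simpa [labelled] using hj

end Schemes

/-- For all d, k the following are equivalent: (a) every class of VC
dimension d has, for every m, an m→k monotone compression scheme; (b) every class of VC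
dimension d has, for every m, a proper sample compression scheme of size k for samples
of size at most m. -/
theorem stmt_16 (d k : ℕ) :
    (∀ (X : Type u) (F : Set (Set X)), VCDim F = (d : ℕ∞) →
      ∀ m : ℕ, ∃ η : List X → Set X, MonCompScheme F m k η) ↔
    (∀ (X : Type u) (F : Set (Set X)), VCDim F = (d : ℕ∞) →
      ∀ m : ℕ, ∃ κ : List (X × Bool) → Set X, ProperCompScheme F m k κ) := by
  constructor
  · intro hmon X F hF m
    obtain ⟨η, hη⟩ := hmon (X × Bool) (indicatorGraph '' F)
      (vcDim_image_indicatorGraph.trans hF) m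
    exact ⟨_, hη.properCompScheme⟩
  · intro hproper X F hF m
    obtain ⟨κ, hκ⟩ := hproper X F hF m
    exact ⟨_, hκ.monCompScheme⟩
end

section
/- Let F = { {(n, h(n)) : n ∈ ℕ} : h : ℕ → {0,1} } be the class of graphs of all Boolean functions on ℕ, a class of subsets of ℕ × {0,1}. Then for every d ∈ ℕ there exists m ∈ ℕ such that F has no m→d monotone compression scheme; in particular, F has no monotone compression scheme of any finite size. -/
/-- The class of graphs of all Boolean functions on ℕ, as subsets of ℕ × Bool. -/
def boolGraphs : Set (Set (ℕ × Bool)) :=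
  {s | ∃ g : ℕ → Bool, s = {p : ℕ × Bool | p.2 = g p.1}}

open Filter Asymptotics

lemma List.eq_of_getElem?_fin_eq {α : Type*} {d : ℕ} {l₁ l₂ : List α} (h₁ : l₁.length ≤ d)
    (h₂ : l₂.length ≤ d) (h : ∀ i : Fin d, l₁[(i : ℕ)]? = l₂[(i : ℕ)]?) : l₁ = l₂ := by
  refine List.ext_getElem? fun i => ?_
  by_cases hi : i < d
  · exact h ⟨i, hi⟩
  · rw [List.getElem?_eq_none (by omega), List.getElem?_eq_none (by omega)]

lemma eventually_two_mul_add_one_pow_lt_two_pow (d : ℕ) :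
    ∀ᶠ m : ℕ in atTop, (2 * m + 1) ^ d < 2 ^ m := by
  have hlin : (fun m : ℕ => (2 * m + 1 : ℝ)) =O[atTop] fun m => (m : ℝ) := by
    refine IsBigO.of_bound 3 ?_
    filter_upwards [eventually_ge_atTop 1] with m hm
    have : (1 : ℝ) ≤ m := by exact_mod_cast hm
    rw [Real.norm_of_nonneg (by positivity), Real.norm_of_nonneg (by positivity)]
    linarith
  have hlo := (hlin.pow d).trans_isLittleO (isLittleO_pow_const_const_pow_of_one_lt d one_lt_two)
  filter_upwards [hlo.bound one_half_pos] with m hm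
  rw [Real.norm_of_nonneg (by positivity), Real.norm_of_nonneg (by positivity)] at hm
  have : ((2 * m + 1) ^ d : ℝ) < 2 ^ m := by
    have : (0 : ℝ) < 2 ^ m := by positivity
    linarith
  exact_mod_cast this

lemma eq_of_mem_boolGraphs {s : Set (ℕ × Bool)} (hs : s ∈ boolGraphs) {n : ℕ} {b b' : Bool}
    (h : (n, b) ∈ s) (h' : (n, b') ∈ s) : b = b' := by
  obtain ⟨g, rfl⟩ := hs
  exact h.trans h'.symm

namespace MonCompScheme

variable {m d : ℕ} {η : List (ℕ × Bool) → Set (ℕ × Bool)}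

lemma exists_compression (hη : MonCompScheme boolGraphs m d η) (g : Fin m → Bool) :
    ∃ k ≤ d, ∃ idx : Fin k → Fin m,
      ∀ j : Fin m, ((j : ℕ), g j) ∈ η (List.ofFn fun t => ((idx t : ℕ), g (idx t))) := by
  let G : ℕ → Bool := fun n => if h : n < m then g ⟨n, h⟩ else false
  exact hη.2 m le_rfl _ ⟨G, rfl⟩ (fun j => ((j : ℕ), g j)) fun j => by simp [G]

lemma two_pow_le_two_mul_add_one_pow (hη : MonCompScheme boolGraphs m d η) :
    2 ^ m ≤ (2 * m + 1) ^ d := by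
  choose k hk idx hidx using hη.exists_compression
  let code (g : Fin m → Bool) : List (Fin m × Bool) := List.ofFn fun t => (idx g t, g (idx g t))
  have hcode_length (g : Fin m → Bool) : (code g).length ≤ d := by simpa [code] using hk g
  have hcode_inj : code.Injective := by
    intro g₁ g₂ h
    have hrec : η (List.ofFn fun t => ((idx g₁ t : ℕ), g₁ (idx g₁ t)))
        = η (List.ofFn fun t => ((idx g₂ t : ℕ), g₂ (idx g₂ t))) := by
      simpa [code, List.map_ofFn, Function.comp_def] using
        congrArg (fun L => η (L.map fun p => ((p.1 : ℕ), p.2))) h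
    have hF := hη.1 (List.ofFn fun t => ((idx g₁ t : ℕ), g₁ (idx g₁ t))) (by simpa using hk g₁)
    funext j
    exact eq_of_mem_boolGraphs hF (hidx g₁ j) (hrec ▸ hidx g₂ j)
  have hpad_inj : Function.Injective fun g (i : Fin d) => (code g)[(i : ℕ)]? :=
    fun g₁ g₂ h => hcode_inj <|
      List.eq_of_getElem?_fin_eq (hcode_length g₁) (hcode_length g₂) (congrFun h)
  simpa [mul_comm] using Fintype.card_le_of_injective _ hpad_inj

end MonCompScheme

/-- For every d there is m such that the class of graphs of Boolean
functions on ℕ has no m→d monotone compression scheme; in particular, it has no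
monotone compression scheme of any finite size. -/
theorem stmt_17 :
    (∀ d : ℕ, ∃ m : ℕ,
      ¬ ∃ η : List (ℕ × Bool) → Set (ℕ × Bool), MonCompScheme boolGraphs m d η) ∧
    (∀ d : ℕ,
      ¬ ∀ m : ℕ, ∃ η : List (ℕ × Bool) → Set (ℕ × Bool),
        MonCompScheme boolGraphs m d η) := by
  have no_scheme (d : ℕ) :
      ∃ m : ℕ, ¬ ∃ η : List (ℕ × Bool) → Set (ℕ × Bool), MonCompScheme boolGraphs m d η := by
    obtain ⟨m, hm⟩ := (eventually_two_mul_add_one_pow_lt_two_pow d).exists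
    exact ⟨m, fun ⟨_, hη⟩ => hm.not_ge hη.two_pow_le_two_mul_add_one_pow⟩
  refine ⟨no_scheme, fun d h => ?_⟩
  obtain ⟨m, hm⟩ := no_scheme d
  exact hm (h m)
end
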